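/- arXiv:math/0603481 — 4 statements merged into one kernel-verified Lean document; each statement's English description precedes it below -/
import Mathlib

section
/- For odd n ≥ 1, the number of even partitions of [n] avoiding 12/3 is ⌊(n−1)²/4⌋ + 1 and the number of odd such partitions is ⌊n²/4⌋. -/
open Finset

structure SetPartition (n : ℕ) where
  blocks : Finset (Finset ℕ)
  nonempty_mem : ∀ B ∈ blocks, B.Nonempty
  disj : ∀ B ∈ blocks, ∀ C ∈ blocks, B ≠ C → Disjoint B C
  cover : blocks.sup id = Finset.Icc 1 n

/-- `σ` contains the pattern `π`: there is an order-preserving choice of elements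
and an injective assignment of blocks of `π` to distinct blocks of `σ`. -/
def SetPartition.Contains {n k : ℕ} (σ : SetPartition n) (π : SetPartition k) : Prop :=
  ∃ f : ℕ → ℕ, StrictMonoOn f (Finset.Icc 1 k : Set ℕ) ∧
    ∃ g : Finset ℕ → Finset ℕ,
      (∀ B ∈ π.blocks, g B ∈ σ.blocks) ∧
      (∀ B ∈ π.blocks, ∀ C ∈ π.blocks, g B = g C → B = C) ∧
      (∀ B ∈ π.blocks, ∀ x ∈ B, f x ∈ g B)

def SetPartition.Avoids {n k : ℕ} (σ : SetPartition n) (π : SetPartition k) : Prop :=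
  ¬ σ.Contains π

def pat1_2_3 : SetPartition 3 := ⟨{{1}, {2}, {3}}, by decide, by decide, by decide⟩
def pat1_23 : SetPartition 3 := ⟨{{1}, {2, 3}}, by decide, by decide, by decide⟩
def pat12_3 : SetPartition 3 := ⟨{{1, 2}, {3}}, by decide, by decide, by decide⟩
def pat13_2 : SetPartition 3 := ⟨{{1, 3}, {2}}, by decide, by decide, by decide⟩
def pat123 : SetPartition 3 := ⟨{{1, 2, 3}}, by decide, by decide, by decide⟩

/-- A partition of `[n]` with `k` blocks is even when `n - k` is even. -/
def SetPartition.IsEven {n : ℕ} (σ : SetPartition n) : Prop :=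
  Even (n - σ.blocks.card)


lemma SetPartition.ext' {n : ℕ} {σ τ : SetPartition n} (h : σ.blocks = τ.blocks) : σ = τ := by
  cases σ; cases τ; simpa using h

def blkf (n m s : ℕ) : ℕ → Finset ℕ := fun x => if x = m then insert m (Icc s n) else {x}

def blk (n m s : ℕ) : Finset (Finset ℕ) := (Icc 1 (s-1)).image (blkf n m s)

lemma mem_blkf {n m s x z : ℕ} :
    z ∈ blkf n m s x ↔ ((x = m ∧ (z = m ∨ (s ≤ z ∧ z ≤ n))) ∨ (x ≠ m ∧ z = x)) := by
  unfold blkf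
  split <;> simp [mem_Icc, *]

lemma blk_nonempty (n m s : ℕ) : ∀ B ∈ blk n m s, B.Nonempty := by
  intro B hB
  simp only [blk, mem_image] at hB
  obtain ⟨x, hx, rfl⟩ := hB
  unfold blkf
  split <;> simp

lemma blk_disj (n m s : ℕ) : ∀ B ∈ blk n m s, ∀ C ∈ blk n m s, B ≠ C → Disjoint B C := by
  intro B hB C hC hBC
  simp only [blk, mem_image] at hB hC
  obtain ⟨x, hx, rfl⟩ := hB
  obtain ⟨y, hy, rfl⟩ := hC
  simp only [mem_Icc] at hx hy
  rw [Finset.disjoint_left]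
  intro z hz hz'
  rw [mem_blkf] at hz hz'
  apply hBC
  have hxy : x = y := by omega
  rw [hxy]

lemma blk_cover (n m s : ℕ) (h1 : 1 ≤ m) (h2 : m < s) (h3 : s ≤ n+1) :
    (blk n m s).sup id = Icc 1 n := by
  ext z
  simp only [blk, Finset.sup_image, Finset.mem_sup, mem_Icc, Function.comp, id]
  constructor
  · rintro ⟨x, hx, hz⟩
    rw [mem_blkf] at hz
    omega
  · intro hz
    by_cases hzs : z ≤ s - 1
    · exact ⟨z, by omega, by rw [mem_blkf]; omega⟩
    · exact ⟨m, by omega, by rw [mem_blkf]; omega⟩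

lemma card_blk (n m s : ℕ) (h1 : 1 ≤ m) (h2 : m < s) : (blk n m s).card = s - 1 := by
  rw [blk, Finset.card_image_of_injOn, Nat.card_Icc]
  · omega
  · intro x hx y hy hxy
    have h1' : x ∈ blkf n m s x := by rw [mem_blkf]; omega
    have h2' : y ∈ blkf n m s y := by rw [mem_blkf]; omega
    rw [hxy] at h1'
    rw [← hxy] at h2'
    rw [mem_blkf] at h1' h2'
    omega

lemma contains_of {n : ℕ} (σ : SetPartition n) {a b c : ℕ} {B C : Finset ℕ}
    (hB : B ∈ σ.blocks) (hC : C ∈ σ.blocks) (hBC : B ≠ C)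
    (ha : a ∈ B) (hb : b ∈ B) (hc : c ∈ C) (hab : a < b) (hbc : b < c) :
    σ.Contains pat12_3 := by
  refine ⟨fun x => if x = 1 then a else if x = 2 then b else c, ?_,
    fun X => if X = {3} then C else B, ?_, ?_, ?_⟩
  · intro x hx y hy hxy
    simp only [Finset.coe_Icc, Set.mem_Icc] at hx hy
    have hx1 : x = 1 ∨ x = 2 ∨ x = 3 := by omega
    have hy1 : y = 1 ∨ y = 2 ∨ y = 3 := by omega
    rcases hx1 with rfl | rfl | rfl <;> rcases hy1 with rfl | rfl | rfl <;> simp <;> omega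
  · intro X hX
    have hne : ({1,2} : Finset ℕ) ≠ {3} := by decide
    simp only [pat12_3, Finset.mem_insert, Finset.mem_singleton] at hX
    rcases hX with rfl | rfl
    · simpa [hne] using hB
    · simpa using hC
  · intro X hX Y hY h
    have hne : ({1,2} : Finset ℕ) ≠ {3} := by decide
    simp only [pat12_3, Finset.mem_insert, Finset.mem_singleton] at hX hY
    rcases hX with rfl | rfl <;> rcases hY with rfl | rfl
    · rfl
    · exact absurd ((by simpa [hne] using h) : B = C) hBC
    · exact absurd ((by simpa [hne] using h) : C = B) (Ne.symm hBC)
    · rfl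
  · intro X hX x hx
    have hne : ({1,2} : Finset ℕ) ≠ {3} := by decide
    simp only [pat12_3, Finset.mem_insert, Finset.mem_singleton] at hX
    rcases hX with rfl | rfl
    · show (if x = 1 then a else if x = 2 then b else c) ∈ (if ({1,2}:Finset ℕ) = {3} then C else B)
      rw [if_neg hne]
      simp only [Finset.mem_insert, Finset.mem_singleton] at hx
      rcases hx with rfl | rfl
      · simpa using ha
      · simpa using hb
    · show (if x = 1 then a else if x = 2 then b else c) ∈ (if ({3}:Finset ℕ) = {3} then C else B)
      rw [if_pos rfl]
      simp only [Finset.mem_singleton] at hx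
      subst hx
      simpa using hc

lemma avoids_blk {n : ℕ} (σ : SetPartition n) {m s : ℕ} (h1 : 1 ≤ m) (h2 : m < s)
    (hb : σ.blocks = blk n m s) : σ.Avoids pat12_3 := by
  rintro ⟨f, hf, g, hg1, hg2, hg3⟩
  have h12 : ({1,2} : Finset ℕ) ∈ pat12_3.blocks := by decide
  have h3 : ({3} : Finset ℕ) ∈ pat12_3.blocks := by decide
  have hB : g {1,2} ∈ σ.blocks := hg1 _ h12
  have hC : g {3} ∈ σ.blocks := hg1 _ h3
  have hBC : g {1,2} ≠ g {3} := fun h => by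
    have := hg2 _ h12 _ h3 h
    exact absurd this (by decide)
  have hf1 : f 1 ∈ g {1,2} := hg3 _ h12 1 (by decide)
  have hf2 : f 2 ∈ g {1,2} := hg3 _ h12 2 (by decide)
  have hf3 : f 3 ∈ g {3} := hg3 _ h3 3 (by decide)
  have m1 : (1:ℕ) ∈ (Finset.Icc 1 3 : Set ℕ) := by simp
  have m2 : (2:ℕ) ∈ (Finset.Icc 1 3 : Set ℕ) := by simp
  have m3 : (3:ℕ) ∈ (Finset.Icc 1 3 : Set ℕ) := by simp
  have h12' : f 1 < f 2 := hf m1 m2 (by norm_num)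
  have h23' : f 2 < f 3 := hf m2 m3 (by norm_num)
  rw [hb] at hB hC
  simp only [blk, mem_image] at hB hC
  obtain ⟨x, hx, hBx⟩ := hB
  obtain ⟨y, hy, hCy⟩ := hC
  rw [← hBx] at hf1 hf2
  rw [← hCy] at hf3
  rw [mem_blkf] at hf1 hf2 hf3
  rw [mem_Icc] at hx hy
  have hne : ¬ (x = m ∧ y = m) := by
    rintro ⟨hx', hy'⟩
    exact hBC (by rw [← hBx, ← hCy, hx', hy'])
  omega

lemma mem_Icc_of_mem_block {n : ℕ} (σ : SetPartition n) {B : Finset ℕ} (hB : B ∈ σ.blocks)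
    {x : ℕ} (hx : x ∈ B) : x ∈ Icc 1 n := by
  rw [← σ.cover]
  exact Finset.mem_sup.2 ⟨B, hB, hx⟩

lemma exists_block {n : ℕ} (σ : SetPartition n) {x : ℕ} (hx : x ∈ Icc 1 n) :
    ∃ B ∈ σ.blocks, x ∈ B := by
  rw [← σ.cover] at hx
  simpa using Finset.mem_sup.1 hx

lemma avoids_imp {n : ℕ} (hn : 1 ≤ n) (σ : SetPartition n) (hav : σ.Avoids pat12_3) :
    ∃ m s, 1 ≤ m ∧ m < s ∧ s ≤ n+1 ∧ (s = n+1 → m = 1) ∧ σ.blocks = blk n m s := by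
  classical
  by_cases hall : ∀ B ∈ σ.blocks, ∃ x, B = {x}
  · refine ⟨1, n+1, le_refl 1, by omega, le_refl _, fun _ => rfl, ?_⟩
    ext B
    simp only [blk, mem_image]
    constructor
    · intro hB
      obtain ⟨x, rfl⟩ := hall B hB
      have hx : x ∈ Icc 1 n := mem_Icc_of_mem_block σ hB (by simp)
      refine ⟨x, by rw [mem_Icc] at hx ⊢; omega, ?_⟩
      rw [mem_Icc] at hx
      unfold blkf
      split
      · rename_i h; subst h
        have : Icc (n+1) n = ∅ := by rw [Icc_eq_empty_iff]; omega
        rw [this]; rfl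
      · rfl
    · rintro ⟨x, hx, rfl⟩
      rw [mem_Icc] at hx
      have hx' : x ∈ Icc 1 n := by rw [mem_Icc]; omega
      obtain ⟨C, hC, hxC⟩ := exists_block σ hx'
      obtain ⟨y, rfl⟩ := hall C hC
      simp only [Finset.mem_singleton] at hxC
      subst hxC
      have : blkf n 1 (n+1) x = {x} := by
        unfold blkf
        split
        · rename_i h; subst h
          have : Icc (n+1) n = ∅ := by rw [Icc_eq_empty_iff]; omega
          rw [this]; rfl
        · rfl
      rw [this]; exact hC
  · push_neg at hall
    obtain ⟨B₀, hB₀, hns⟩ := hall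
    -- B₀ has two distinct elements
    obtain ⟨a₀, ha₀⟩ := σ.nonempty_mem B₀ hB₀
    have hb₀ : ∃ b ∈ B₀, b ≠ a₀ := by
      by_contra h
      push_neg at h
      exact hns a₀ (Finset.eq_singleton_iff_unique_mem.2 ⟨ha₀, h⟩)
    obtain ⟨b₀, hb₀B, hb₀ne⟩ := hb₀
    -- T : elements that are non-minimal in their block
    set T : Finset ℕ := (Icc 1 n).filter (fun x => ∃ B ∈ σ.blocks, ∃ y ∈ B, y < x ∧ x ∈ B) with hT
    have hTne : T.Nonempty := by
      rcases lt_or_gt_of_ne hb₀ne with h | h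
      · exact ⟨a₀, by rw [hT, mem_filter]; exact ⟨mem_Icc_of_mem_block σ hB₀ ha₀, B₀, hB₀, b₀, hb₀B, h, ha₀⟩⟩
      · exact ⟨b₀, by rw [hT, mem_filter]; exact ⟨mem_Icc_of_mem_block σ hB₀ hb₀B, B₀, hB₀, a₀, ha₀, h, hb₀B⟩⟩
    set s := T.min' hTne with hs
    have hsT : s ∈ T := T.min'_mem hTne
    rw [hT, mem_filter] at hsT
    obtain ⟨hsIcc, B, hB, a, haB, has, hsB⟩ := hsT
    rw [mem_Icc] at hsIcc
    have hmin : ∀ x ∈ T, s ≤ x := fun x hx => T.min'_le x hx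
    have haIcc := mem_Icc_of_mem_block σ hB haB
    rw [mem_Icc] at haIcc
    -- Claim 1 : Icc s n ⊆ B
    have hclaim1 : ∀ y, s ≤ y → y ≤ n → y ∈ B := by
      intro y hsy hyn
      rcases eq_or_lt_of_le hsy with rfl | hlt
      · exact hsB
      · obtain ⟨C, hC, hyC⟩ := exists_block σ (show y ∈ Icc 1 n by rw [mem_Icc]; omega)
        by_cases hCB : C = B
        · rw [← hCB]; exact hyC
        · exact absurd (contains_of σ hB hC (Ne.symm hCB) haB hsB hyC has hlt) hav
    -- Claim 2 : B = insert a (Icc s n)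
    have hclaim2 : B = insert a (Icc s n) := by
      ext z
      simp only [Finset.mem_insert, mem_Icc]
      constructor
      · intro hz
        by_cases hza : z = a
        · left; exact hza
        · right
          have hzn := mem_Icc_of_mem_block σ hB hz
          rw [mem_Icc] at hzn
          rcases lt_trichotomy z a with h | h | h
          · exfalso
            have : a ∈ T := by
              rw [hT, mem_filter]
              exact ⟨by rw [mem_Icc]; omega, B, hB, z, hz, h, haB⟩
            have := hmin a this
            omega
          · exact absurd h hza
          · have : z ∈ T := by
              rw [hT, mem_filter]
              exact ⟨by rw [mem_Icc]; omega, B, hB, a, haB, h, hz⟩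
            exact ⟨hmin z this, hzn.2⟩
      · rintro (rfl | ⟨h1, h2⟩)
        · exact haB
        · exact hclaim1 z h1 h2
    -- Claim 3 : other blocks are singletons {x} with x < s, x ≠ a
    have hclaim3 : ∀ C ∈ σ.blocks, C ≠ B → ∃ x, x < s ∧ x ≠ a ∧ 1 ≤ x ∧ C = {x} := by
      intro C hC hCB
      obtain ⟨x, hxC⟩ := σ.nonempty_mem C hC
      have hdisj := σ.disj C hC B hB hCB
      have hxn := mem_Icc_of_mem_block σ hC hxC
      rw [mem_Icc] at hxn
      have hxs : x < s := by
        by_contra h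
        push_neg at h
        have : x ∈ B := hclaim1 x h hxn.2
        exact (Finset.disjoint_left.1 hdisj hxC) this
      have hxa : x ≠ a := by
        intro h; subst h
        exact (Finset.disjoint_left.1 hdisj hxC) haB
      refine ⟨x, hxs, hxa, hxn.1, ?_⟩
      ext z
      simp only [Finset.mem_singleton]
      constructor
      · intro hz
        by_contra hzx
        -- two distinct elements in C: the larger one is in T hence ≥ s, but < s
        have hzn := mem_Icc_of_mem_block σ hC hz
        rw [mem_Icc] at hzn
        rcases lt_trichotomy z x with h | h | h
        · have : x ∈ T := by
            rw [hT, mem_filter]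
            exact ⟨by rw [mem_Icc]; omega, C, hC, z, hz, h, hxC⟩
          have := hmin x this; omega
        · exact hzx h
        · have : z ∈ T := by
            rw [hT, mem_filter]
            exact ⟨by rw [mem_Icc]; omega, C, hC, x, hxC, h, hz⟩
          have hzs := hmin z this
          have : z ∈ B := hclaim1 z hzs hzn.2
          exact (Finset.disjoint_left.1 hdisj hz) this
      · rintro rfl; exact hxC
    refine ⟨a, s, haIcc.1, has, by omega, by omega, ?_⟩
    ext X
    simp only [blk, mem_image]
    constructor
    · intro hX
      by_cases hXB : X = B
      · refine ⟨a, by rw [mem_Icc]; omega, ?_⟩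
        rw [hXB, hclaim2]
        unfold blkf
        rw [if_pos rfl]
      · obtain ⟨x, hxs, hxa, hx1, rfl⟩ := hclaim3 X hX hXB
        refine ⟨x, by rw [mem_Icc]; omega, ?_⟩
        unfold blkf
        rw [if_neg hxa]
    · rintro ⟨x, hx, rfl⟩
      rw [mem_Icc] at hx
      unfold blkf
      split
      · rename_i h; subst h
        rw [← hclaim2]; exact hB
      · rename_i hxa
        have hx' : x ∈ Icc 1 n := by rw [mem_Icc]; omega
        obtain ⟨C, hC, hxC⟩ := exists_block σ hx'
        have hCB : C ≠ B := by
          intro h; subst h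
          rw [hclaim2] at hxC
          simp only [Finset.mem_insert, mem_Icc] at hxC
          omega
        obtain ⟨y, hys, hya, hy1, rfl⟩ := hclaim3 C hC hCB
        simp only [Finset.mem_singleton] at hxC
        subst hxC
        exact hC

lemma blk_inj {n m s m' s' : ℕ} (h1 : 1 ≤ m) (h2 : m < s) (h3 : s ≤ n+1) (h4 : s = n+1 → m = 1)
    (h1' : 1 ≤ m') (h2' : m' < s') (h3' : s' ≤ n+1) (h4' : s' = n+1 → m' = 1)
    (heq : blk n m s = blk n m' s') : m = m' ∧ s = s' := by
  have hcard : s = s' := by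
    have := card_blk n m s h1 h2
    have := card_blk n m' s' h1' h2'
    rw [heq] at *
    omega
  subst hcard
  refine ⟨?_, rfl⟩
  by_cases hsn : s = n + 1
  · rw [h4 hsn, h4' hsn]
  · -- s ≤ n; big block argument
    have hsn' : s ≤ n := by omega
    have hbb : blkf n m s m ∈ blk n m s := by
      rw [blk]
      exact Finset.mem_image_of_mem _ (by rw [mem_Icc]; omega)
    rw [heq, blk, mem_image] at hbb
    obtain ⟨y, hy, hyeq⟩ := hbb
    rw [mem_Icc] at hy
    have hm : m ∈ blkf n m s m := by rw [mem_blkf]; omega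
    have hn' : n ∈ blkf n m s m := by rw [mem_blkf]; omega
    rw [← hyeq] at hm hn'
    rw [mem_blkf] at hm hn'
    omega

def defaultPart (n : ℕ) : SetPartition n where
  blocks := (Icc 1 n).image (fun x => {x})
  nonempty_mem := by
    intro B hB
    simp only [mem_image] at hB
    obtain ⟨x, _, rfl⟩ := hB
    simp
  disj := by
    intro B hB C hC hBC
    simp only [mem_image] at hB hC
    obtain ⟨x, _, rfl⟩ := hB
    obtain ⟨y, _, rfl⟩ := hC
    simp only [Finset.disjoint_left, Finset.mem_singleton]
    rintro z rfl rfl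
    exact hBC rfl
  cover := by
    ext z
    simp only [Finset.sup_image, Finset.mem_sup, Function.comp, id, Finset.mem_singleton]
    constructor
    · rintro ⟨x, hx, rfl⟩; exact hx
    · intro hz; exact ⟨z, hz, rfl⟩

noncomputable def Φ (n : ℕ) (p : Σ _ : ℕ, ℕ) : SetPartition n :=
  if h : 1 ≤ p.2 ∧ p.2 < p.1 ∧ p.1 ≤ n+1 then
    ⟨blk n p.2 p.1, blk_nonempty n p.2 p.1, blk_disj n p.2 p.1,
      blk_cover n p.2 p.1 h.1 h.2.1 h.2.2⟩
  else defaultPart n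

lemma Φ_blocks (n : ℕ) (p : Σ _ : ℕ, ℕ) (h : 1 ≤ p.2 ∧ p.2 < p.1 ∧ p.1 ≤ n+1) :
    (Φ n p).blocks = blk n p.2 p.1 := by
  rw [Φ, dif_pos h]

def Fe (n : ℕ) : Finset (Σ _ : ℕ, ℕ) :=
  insert ⟨n+1, 1⟩ (((Icc 1 n).filter (fun s => Even (n - (s-1)))).sigma (fun s => Icc 1 (s-1)))

def Fo (n : ℕ) : Finset (Σ _ : ℕ, ℕ) :=
  ((Icc 1 n).filter (fun s => ¬ Even (n - (s-1)))).sigma (fun s => Icc 1 (s-1))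

lemma mem_Fe {n : ℕ} (hn : 1 ≤ n) (p : Σ _ : ℕ, ℕ) :
    p ∈ Fe n ↔ (1 ≤ p.2 ∧ p.2 < p.1 ∧ p.1 ≤ n+1 ∧ (p.1 = n+1 → p.2 = 1) ∧
      Even (n - (p.1 - 1))) := by
  obtain ⟨s, m⟩ := p
  rw [Fe, Finset.mem_insert, Finset.mem_sigma, mem_filter, mem_Icc, mem_Icc]
  dsimp only
  rw [show ((⟨s, m⟩ : Σ _ : ℕ, ℕ) = ⟨n+1, 1⟩) ↔ (s = n+1 ∧ m = 1) by simp]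
  constructor
  · rintro (⟨rfl, rfl⟩ | ⟨⟨⟨hs1, hsn⟩, hev⟩, hm⟩)
    · refine ⟨le_rfl, by omega, le_rfl, fun _ => rfl, by simp⟩
    · exact ⟨hm.1, by omega, by omega, by omega, hev⟩
  · rintro ⟨h1, h2, h3, h4, h5⟩
    by_cases hs : s = n+1
    · exact Or.inl ⟨hs, h4 hs⟩
    · exact Or.inr ⟨⟨⟨by omega, by omega⟩, h5⟩, by omega⟩

lemma mem_Fo {n : ℕ} (p : Σ _ : ℕ, ℕ) :
    p ∈ Fo n ↔ (1 ≤ p.2 ∧ p.2 < p.1 ∧ p.1 ≤ n ∧ ¬ Even (n - (p.1 - 1))) := by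
  obtain ⟨s, m⟩ := p
  rw [Fo, Finset.mem_sigma, mem_filter, mem_Icc, mem_Icc]
  dsimp only
  constructor
  · rintro ⟨⟨⟨hs1, hsn⟩, hev⟩, hm⟩
    exact ⟨hm.1, by omega, by omega, hev⟩
  · rintro ⟨h1, h2, h3, h4⟩
    exact ⟨⟨⟨by omega, h3⟩, h4⟩, by omega⟩

lemma valid_of_Fe {n : ℕ} (hn : 1 ≤ n) {p : Σ _ : ℕ, ℕ} (hp : p ∈ Fe n) :
    1 ≤ p.2 ∧ p.2 < p.1 ∧ p.1 ≤ n+1 := by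
  rw [mem_Fe hn] at hp
  exact ⟨hp.1, hp.2.1, hp.2.2.1⟩

lemma valid_of_Fo {n : ℕ} {p : Σ _ : ℕ, ℕ} (hp : p ∈ Fo n) :
    1 ≤ p.2 ∧ p.2 < p.1 ∧ p.1 ≤ n+1 := by
  rw [mem_Fo] at hp
  exact ⟨hp.1, hp.2.1, by omega⟩

lemma injOn_Φ_Fe {n : ℕ} (hn : 1 ≤ n) : Set.InjOn (Φ n) (Fe n) := by
  intro p hp q hq h
  rw [Finset.mem_coe] at hp hq
  have hpv := valid_of_Fe hn hp
  have hqv := valid_of_Fe hn hq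
  have hb : blk n p.2 p.1 = blk n q.2 q.1 := by
    rw [← Φ_blocks n p hpv, ← Φ_blocks n q hqv, h]
  rw [mem_Fe hn] at hp hq
  obtain ⟨hm, hs⟩ := blk_inj hp.1 hp.2.1 hp.2.2.1 hp.2.2.2.1 hq.1 hq.2.1 hq.2.2.1 hq.2.2.2.1 hb
  obtain ⟨s, m⟩ := p
  obtain ⟨s', m'⟩ := q
  dsimp only at hm hs
  subst hm; subst hs; rfl

lemma injOn_Φ_Fo {n : ℕ} : Set.InjOn (Φ n) (Fo n) := by
  intro p hp q hq h
  rw [Finset.mem_coe] at hp hq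
  have hpv := valid_of_Fo hp
  have hqv := valid_of_Fo hq
  have hb : blk n p.2 p.1 = blk n q.2 q.1 := by
    rw [← Φ_blocks n p hpv, ← Φ_blocks n q hqv, h]
  rw [mem_Fo] at hp hq
  obtain ⟨hm, hs⟩ := blk_inj hp.1 hp.2.1 (by omega) (fun he => absurd he (by omega))
    hq.1 hq.2.1 (by omega) (fun he => absurd he (by omega)) hb
  obtain ⟨s, m⟩ := p
  obtain ⟨s', m'⟩ := q
  dsimp only at hm hs
  subst hm; subst hs; rfl

lemma even_set_eq (n : ℕ) (hn : 1 ≤ n) :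
    {σ : SetPartition n | σ.Avoids pat12_3 ∧ σ.IsEven} =
      ↑(@Finset.image _ _ (Classical.decEq _) (Φ n) (Fe n)) := by
  letI : DecidableEq (SetPartition n) := Classical.decEq _
  ext σ
  rw [Set.mem_setOf_eq, Finset.mem_coe, Finset.mem_image]
  constructor
  · rintro ⟨hav, hev⟩
    obtain ⟨m, s, h1, h2, h3, h4, heq⟩ := avoids_imp hn σ hav
    have hcard : σ.blocks.card = s - 1 := by rw [heq]; exact card_blk n m s h1 h2
    refine ⟨⟨s, m⟩, ?_, ?_⟩
    · rw [mem_Fe hn]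
      refine ⟨h1, h2, h3, h4, ?_⟩
      have := hev
      rw [SetPartition.IsEven, hcard] at this
      exact this
    · exact (SetPartition.ext' ((Φ_blocks n ⟨s, m⟩ ⟨h1, h2, h3⟩).trans heq.symm))
  · rintro ⟨p, hp, rfl⟩
    have hpv := valid_of_Fe hn hp
    have hb := Φ_blocks n p hpv
    rw [mem_Fe hn] at hp
    refine ⟨avoids_blk _ hpv.1 hpv.2.1 hb, ?_⟩
    rw [SetPartition.IsEven, hb, card_blk n p.2 p.1 hpv.1 hpv.2.1]
    exact hp.2.2.2.2

lemma odd_set_eq (n : ℕ) (hn : 1 ≤ n) :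
    {σ : SetPartition n | σ.Avoids pat12_3 ∧ ¬ σ.IsEven} =
      ↑(@Finset.image _ _ (Classical.decEq _) (Φ n) (Fo n)) := by
  letI : DecidableEq (SetPartition n) := Classical.decEq _
  ext σ
  rw [Set.mem_setOf_eq, Finset.mem_coe, Finset.mem_image]
  constructor
  · rintro ⟨hav, hev⟩
    obtain ⟨m, s, h1, h2, h3, h4, heq⟩ := avoids_imp hn σ hav
    have hcard : σ.blocks.card = s - 1 := by rw [heq]; exact card_blk n m s h1 h2
    rw [SetPartition.IsEven, hcard] at hev
    have hsn : s ≤ n := by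
      by_contra h
      have hs' : s = n + 1 := by omega
      rw [hs'] at hev
      simp at hev
    refine ⟨⟨s, m⟩, ?_, ?_⟩
    · rw [mem_Fo]
      exact ⟨h1, h2, hsn, hev⟩
    · exact (SetPartition.ext' ((Φ_blocks n ⟨s, m⟩ ⟨h1, h2, Nat.le_succ_of_le hsn⟩).trans heq.symm))
  · rintro ⟨p, hp, rfl⟩
    have hpv := valid_of_Fo hp
    have hb := Φ_blocks n p hpv
    rw [mem_Fo] at hp
    refine ⟨avoids_blk _ hpv.1 hpv.2.1 hb, ?_⟩
    rw [SetPartition.IsEven, hb, card_blk n p.2 p.1 hpv.1 hpv.2.1]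
    exact hp.2.2.2

lemma sumE (n : ℕ) : (∑ s ∈ (Icc 1 n).filter (fun s => Even s), (s-1)) = (n/2) * (n/2) := by
  induction n with
  | zero => simp
  | succ n ih =>
    rw [show Icc 1 (n+1) = insert (n+1) (Icc 1 n) from
      (Finset.insert_Icc_right_eq_Icc_add_one (by omega)).symm]
    rw [filter_insert]
    by_cases h : Even (n+1)
    · rw [if_pos h, Finset.sum_insert (by simp), ih]
      obtain ⟨q, hq⟩ := h
      have hq1 : 1 ≤ q := by omega
      obtain ⟨r, rfl⟩ := Nat.exists_eq_add_of_le hq1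
      have e1 : n / 2 = r := by omega
      have e2 : (n+1) / 2 = r + 1 := by omega
      rw [e1, e2]
      have hx : (r+1) * (r+1) = r * r + 2 * r + 1 := by ring
      rw [hx]
      generalize r * r = A
      omega
    · rw [if_neg h, ih]
      have : (n+1)/2 = n/2 := by
        rw [Nat.even_iff] at h
        omega
      rw [this]

lemma sumO (n : ℕ) : (∑ s ∈ (Icc 1 n).filter (fun s => ¬ Even s), (s-1)) =
    ((n+1)/2) * ((n+1)/2 - 1) := by
  induction n with
  | zero => simp
  | succ n ih =>
    rw [show Icc 1 (n+1) = insert (n+1) (Icc 1 n) from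
      (Finset.insert_Icc_right_eq_Icc_add_one (by omega)).symm]
    rw [filter_insert]
    by_cases h : Even (n+1)
    · rw [if_neg (by simpa using h), ih]
      have hx : (n+1+1)/2 = (n+1)/2 := by
        rw [Nat.even_iff] at h
        omega
      rw [hx]
    · rw [if_pos h, Finset.sum_insert (by simp), ih]
      rw [Nat.even_iff] at h
      have h0 : n % 2 = 0 := by omega
      obtain ⟨r, hr⟩ : ∃ r, n = 2 * r := ⟨n / 2, by omega⟩
      have e1 : (n+1)/2 = r := by omega
      have e2 : (n+1+1)/2 = r + 1 := by omega
      rw [e1, e2]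
      rcases Nat.eq_zero_or_pos r with rfl | hr1
      · simp; omega
      · obtain ⟨t, rfl⟩ := Nat.exists_eq_add_of_le hr1
        have hx1 : (1 + t) - 1 = t := by omega
        have hx2 : (1 + t + 1) - 1 = 1 + t := by omega
        rw [hx1, hx2]
        have hy1 : (1 + t) * t = t * t + t := by ring
        have hy2 : (1 + t + 1) * (1 + t) = t * t + 3 * t + 2 := by ring
        rw [hy1, hy2]
        generalize t * t = A
        omega

theorem stmt11 (n : ℕ) (hn : 1 ≤ n) (hodd : Odd n) :
    ({σ : SetPartition n | σ.Avoids pat12_3 ∧ σ.IsEven}).ncard =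
        (n - 1) ^ 2 / 4 + 1 ∧
    ({σ : SetPartition n | σ.Avoids pat12_3 ∧ ¬ σ.IsEven}).ncard = n ^ 2 / 4 := by
  letI : DecidableEq (SetPartition n) := Classical.decEq _
  obtain ⟨q, hq⟩ := hodd
  constructor
  · rw [even_set_eq n hn, Set.ncard_coe_finset,
      Finset.card_image_of_injOn (injOn_Φ_Fe hn), Fe,
      Finset.card_insert_of_notMem (by
        intro hmem
        rw [Finset.mem_sigma, mem_filter, mem_Icc] at hmem
        dsimp only at hmem
        omega),
      Finset.card_sigma]
    have hfc : (Icc 1 n).filter (fun s => Even (n - (s-1))) =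
        (Icc 1 n).filter (fun s => Even s) := by
      apply Finset.filter_congr
      intro s hs
      rw [mem_Icc] at hs
      rw [Nat.even_iff, Nat.even_iff]
      omega
    rw [hfc]
    simp only [Nat.card_Icc, Nat.add_sub_cancel]
    rw [sumE]
    have e1 : n / 2 = q := by omega
    have e2 : n - 1 = 2 * q := by omega
    rw [e1, e2]
    have e3 : (2 * q) ^ 2 = 4 * (q * q) := by ring
    rw [e3, Nat.mul_div_cancel_left (q * q) (by norm_num : (0:ℕ) < 4)]
  · rw [odd_set_eq n hn, Set.ncard_coe_finset,
      Finset.card_image_of_injOn injOn_Φ_Fo, Fo, Finset.card_sigma]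
    have hfc : (Icc 1 n).filter (fun s => ¬ Even (n - (s-1))) =
        (Icc 1 n).filter (fun s => ¬ Even s) := by
      apply Finset.filter_congr
      intro s hs
      rw [mem_Icc] at hs
      rw [Nat.even_iff, Nat.even_iff]
      omega
    rw [hfc]
    simp only [Nat.card_Icc, Nat.add_sub_cancel]
    rw [sumO]
    have e1 : (n + 1) / 2 = q + 1 := by omega
    rw [e1]
    have e2 : n ^ 2 = 4 * (q * q + q) + 1 := by rw [hq]; ring
    rw [e2]
    have e3 : (4 * (q * q + q) + 1) / 4 = q * q + q := by
      generalize q * q + q = A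
      omega
    rw [e3]
    have e4 : (q + 1) - 1 = q := by omega
    rw [e4]
    ring
end

section
/- Let e_n and o_n be the numbers of even and odd layered matchings of [n] respectively (partitions avoiding 13/2 and 123). Then e_n = ⌈F_n/2⌉ and o_n = ⌊F_n/2⌋ when n ≡ 0,1 (mod 6); e_n = o_n = F_n/2 when n ≡ 2,5 (mod 6); and e_n = ⌊F_n/2⌋, o_n = ⌈F_n/2⌉ when n ≡ 3,4 (mod 6). Here F_0 = F_1 = 1 and F_n = F_{n−1} + F_{n−2}. -/
open Finset

/-- A partition is layered when every block is an interval. -/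
def SetPartition.Layered {n : ℕ} (σ : SetPartition n) : Prop :=
  ∀ B ∈ σ.blocks, ∃ a b : ℕ, B = Finset.Icc a b

/-- Fibonacci numbers with `F 0 = F 1 = 1`. -/
def F : ℕ → ℕ
  | 0 => 1
  | 1 => 1
  | n + 2 => F (n + 1) + F n

/-- The number of even layered matchings of `[n]`. -/
noncomputable def eLM (n : ℕ) : ℕ :=
  ({σ : SetPartition n | σ.Layered ∧ (∀ B ∈ σ.blocks, B.card ≤ 2) ∧ σ.IsEven}).ncard

/-- The number of odd layered matchings of `[n]`. -/
noncomputable def oLM (n : ℕ) : ℕ :=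
  ({σ : SetPartition n | σ.Layered ∧ (∀ B ∈ σ.blocks, B.card ≤ 2) ∧ ¬ σ.IsEven}).ncard

namespace SetPartition

theorem ext'_s14 {n : ℕ} {σ τ : SetPartition n} (h : σ.blocks = τ.blocks) : σ = τ := by
  cases σ; cases τ; simpa using h

theorem block_subset {n : ℕ} (σ : SetPartition n) {B : Finset ℕ} (hB : B ∈ σ.blocks) :
    B ⊆ Finset.Icc 1 n := by
  have := Finset.le_sup (f := id) hB
  rw [σ.cover] at this; exact this

instance {n : ℕ} : Finite (SetPartition n) :=
  Finite.of_injective (fun σ : SetPartition n =>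
    (⟨σ.blocks, by
      simp only [Finset.mem_powerset]
      intro B hB
      simpa [Finset.mem_powerset] using σ.block_subset hB⟩ :
      ((Finset.Icc 1 n).powerset.powerset : Finset (Finset (Finset ℕ)))))
    (fun σ τ h => ext'_s14 (by simpa using congrArg Subtype.val h))

theorem card_blocks_le {n : ℕ} (σ : SetPartition n) : σ.blocks.card ≤ n := by
  have h1 : σ.blocks.biUnion id = Finset.Icc 1 n := by
    rw [← Finset.sup_eq_biUnion, σ.cover]
  have h2 := Finset.card_biUnion (s := σ.blocks) (t := id)
    (fun B hB C hC hBC => σ.disj B hB C hC hBC)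
  calc σ.blocks.card = ∑ _B ∈ σ.blocks, 1 := by simp
    _ ≤ ∑ B ∈ σ.blocks, (id B).card :=
        Finset.sum_le_sum (fun B hB => Finset.card_pos.2 (σ.nonempty_mem B hB))
    _ = (Finset.Icc 1 n).card := by rw [← h2, h1]
    _ = n := by simp

/-- The new top block `Icc (n+1) (n+j)` is never an old block. -/
theorem top_not_mem {n j : ℕ} (hj : 1 ≤ j) (σ : SetPartition n) :
    Finset.Icc (n+1) (n+j) ∉ σ.blocks := by
  intro h
  have h1 : n + 1 ∈ Finset.Icc (n+1) (n+j) := Finset.mem_Icc.2 ⟨le_refl _, by omega⟩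
  have := σ.block_subset h h1
  rw [Finset.mem_Icc] at this; omega

def addBlock {n : ℕ} (j : ℕ) (hj : 1 ≤ j) (σ : SetPartition n) : SetPartition (n + j) where
  blocks := insert (Finset.Icc (n+1) (n+j)) σ.blocks
  nonempty_mem := by
    intro B hB
    rcases Finset.mem_insert.1 hB with h | h
    · subst h; exact Finset.nonempty_Icc.2 (by omega)
    · exact σ.nonempty_mem B h
  disj := by
    have key : ∀ D ∈ σ.blocks, Disjoint (Finset.Icc (n+1) (n+j)) D := by
      intro D hD
      refine Finset.disjoint_left.2 fun x hx hx' => ?_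
      have := σ.block_subset hD hx'
      simp [Finset.mem_Icc] at hx this; omega
    intro B hB C hC hBC
    rcases Finset.mem_insert.1 hB with h | h <;> rcases Finset.mem_insert.1 hC with h' | h'
    · exact absurd (h.trans h'.symm) hBC
    · subst h; exact key C h'
    · subst h'; exact (key B h).symm
    · exact σ.disj B h C h' hBC
  cover := by
    rw [Finset.sup_insert, σ.cover]
    ext x
    simp only [Finset.sup_eq_union, Finset.mem_union, Finset.mem_Icc, id]
    omega

theorem addBlock_blocks {n : ℕ} (j : ℕ) (hj : 1 ≤ j) (σ : SetPartition n) :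
    (addBlock j hj σ).blocks = insert (Finset.Icc (n+1) (n+j)) σ.blocks := rfl

theorem addBlock_card {n : ℕ} (j : ℕ) (hj : 1 ≤ j) (σ : SetPartition n) :
    (addBlock j hj σ).blocks.card = σ.blocks.card + 1 :=
  Finset.card_insert_of_notMem (top_not_mem hj σ)

theorem addBlock_injective {n : ℕ} (j : ℕ) (hj : 1 ≤ j) :
    Function.Injective (addBlock (n := n) j hj) := by
  intro σ τ h
  apply ext'_s14
  have h' := congrArg blocks h
  rw [addBlock_blocks, addBlock_blocks] at h'
  have e1 := Finset.erase_insert (top_not_mem hj σ)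
  have e2 := Finset.erase_insert (top_not_mem hj τ)
  rw [← e1, ← e2, h']

def removeTop {n j : ℕ} (hj : 1 ≤ j) (σ : SetPartition (n + j))
    (hB : Finset.Icc (n+1) (n+j) ∈ σ.blocks) : SetPartition n where
  blocks := σ.blocks.erase (Finset.Icc (n+1) (n+j))
  nonempty_mem := fun B hB' => σ.nonempty_mem B (Finset.mem_of_mem_erase hB')
  disj := fun B hB' C hC' => σ.disj B (Finset.mem_of_mem_erase hB') C (Finset.mem_of_mem_erase hC')
  cover := by
    apply le_antisymm
    · apply Finset.sup_le
      intro C hC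
      obtain ⟨hne, hC⟩ := Finset.mem_erase.1 hC
      have hsub := σ.block_subset hC
      have hdisj := σ.disj C hC _ hB hne
      intro x hx
      have h1 := hsub hx
      simp only [Finset.mem_Icc] at h1 ⊢
      refine ⟨h1.1, ?_⟩
      by_contra hgt
      have hx2 : x ∈ Finset.Icc (n+1) (n+j) := by rw [Finset.mem_Icc]; omega
      exact (Finset.disjoint_left.1 hdisj hx) hx2
    · intro x hx
      simp only [Finset.mem_Icc] at hx
      have hx' : x ∈ σ.blocks.sup id := by
        rw [σ.cover, Finset.mem_Icc]; omega
      obtain ⟨C, hC, hxC⟩ := Finset.mem_sup.1 hx'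
      simp only [id_eq] at hxC
      have hne : C ≠ Finset.Icc (n+1) (n+j) := by
        intro h; subst h
        rw [Finset.mem_Icc] at hxC; omega
      exact Finset.mem_sup.2 ⟨C, Finset.mem_erase.2 ⟨hne, hC⟩, hxC⟩

theorem addBlock_removeTop {n j : ℕ} (hj : 1 ≤ j) (σ : SetPartition (n + j))
    (hB : Finset.Icc (n+1) (n+j) ∈ σ.blocks) :
    addBlock j hj (removeTop hj σ hB) = σ :=
  ext'_s14 (Finset.insert_erase hB)

theorem removeTop_blocks {n j : ℕ} (hj : 1 ≤ j) (σ : SetPartition (n + j))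
    (hB : Finset.Icc (n+1) (n+j) ∈ σ.blocks) :
    (removeTop hj σ hB).blocks = σ.blocks.erase (Finset.Icc (n+1) (n+j)) := rfl

end SetPartition

/-- The set of layered matchings of `[n]` with parity given by `b`
(`b = true` means even). -/
def LS (n : ℕ) (b : Bool) : Set (SetPartition n) :=
  {σ | σ.Layered ∧ (∀ B ∈ σ.blocks, B.card ≤ 2) ∧
    (n - σ.blocks.card) % 2 = (cond b 0 1)}

theorem LS_succ_succ (n : ℕ) (b : Bool) :
    LS (n+2) b = (SetPartition.addBlock (n := n+1) 1 le_rfl '' LS (n+1) b) ∪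
                 (SetPartition.addBlock (n := n) 2 one_le_two '' LS n (!b)) := by
  ext σ
  constructor
  · rintro ⟨hlay, hcard, hpar⟩
    have h2 : (n + 2 : ℕ) ∈ Finset.Icc 1 (n+2) := by simp
    rw [← σ.cover] at h2
    obtain ⟨B, hBmem, hB2⟩ := Finset.mem_sup.1 h2
    obtain ⟨a, c, rfl⟩ := hlay B hBmem
    have hsub := σ.block_subset hBmem
    simp only [id_eq] at hB2
    rw [Finset.mem_Icc] at hB2
    have hc : c ≤ n + 2 := by
      have hcB : c ∈ Finset.Icc a c := Finset.mem_Icc.2 ⟨le_trans hB2.1 hB2.2, le_refl c⟩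
      have := hsub hcB
      rw [Finset.mem_Icc] at this; exact this.2
    have hcardB := hcard _ hBmem
    rw [Nat.card_Icc] at hcardB
    have hc2 : c = n + 2 := le_antisymm hc hB2.2
    subst hc2
    have hk1 : 1 ≤ σ.blocks.card := Finset.card_pos.2 ⟨_, hBmem⟩
    have hkle := σ.card_blocks_le
    have ha : a = n + 1 ∨ a = n + 2 := by omega
    rcases ha with ha | ha
    · -- block of size 2 on top
      subst ha
      right
      refine ⟨SetPartition.removeTop (n := n) (j := 2) one_le_two σ hBmem,
        ⟨?_, ?_, ?_⟩, SetPartition.addBlock_removeTop _ _ _⟩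
      · intro C hC
        exact hlay C (Finset.mem_of_mem_erase hC)
      · intro C hC
        exact hcard C (Finset.mem_of_mem_erase hC)
      · have hk2 := (SetPartition.removeTop (n := n) (j := 2) one_le_two σ hBmem).card_blocks_le
        rw [SetPartition.removeTop_blocks, Finset.card_erase_of_mem hBmem] at hk2
        show (n - (σ.blocks.erase (Finset.Icc (n+1) (n+2))).card) % 2 = cond (!b) 0 1
        rw [Finset.card_erase_of_mem hBmem]
        cases b <;> simp only [Bool.cond_true, Bool.cond_false, Bool.not_true, Bool.not_false] at hpar ⊢ <;> omega
    · -- block of size 1 on top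
      subst ha
      left
      refine ⟨SetPartition.removeTop (n := n+1) (j := 1) le_rfl σ hBmem,
        ⟨?_, ?_, ?_⟩, SetPartition.addBlock_removeTop _ _ _⟩
      · intro C hC
        exact hlay C (Finset.mem_of_mem_erase hC)
      · intro C hC
        exact hcard C (Finset.mem_of_mem_erase hC)
      · have hk2 := (SetPartition.removeTop (n := n+1) (j := 1) le_rfl σ hBmem).card_blocks_le
        rw [SetPartition.removeTop_blocks, Finset.card_erase_of_mem hBmem] at hk2
        rw [SetPartition.removeTop_blocks, Finset.card_erase_of_mem hBmem]
        cases b <;> simp only [Bool.cond_true, Bool.cond_false, Bool.not_true, Bool.not_false] at hpar ⊢ <;> omega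
  · rintro (⟨σ', ⟨hlay, hcard, hpar⟩, rfl⟩ | ⟨σ', ⟨hlay, hcard, hpar⟩, rfl⟩)
    · have hkle := σ'.card_blocks_le
      refine ⟨?_, ?_, ?_⟩
      · intro C hC
        rcases Finset.mem_insert.1 hC with h | h
        · exact ⟨_, _, h⟩
        · exact hlay C h
      · intro C hC
        rcases Finset.mem_insert.1 hC with h | h
        · subst h; rw [Nat.card_Icc]; omega
        · exact hcard C h
      · rw [SetPartition.addBlock_card]
        cases b <;> simp only [Bool.cond_true, Bool.cond_false, Bool.not_true, Bool.not_false] at hpar ⊢ <;> omega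
    · have hkle := σ'.card_blocks_le
      refine ⟨?_, ?_, ?_⟩
      · intro C hC
        rcases Finset.mem_insert.1 hC with h | h
        · exact ⟨_, _, h⟩
        · exact hlay C h
      · intro C hC
        rcases Finset.mem_insert.1 hC with h | h
        · subst h; rw [Nat.card_Icc]; omega
        · exact hcard C h
      · rw [SetPartition.addBlock_card]
        cases b <;> simp only [Bool.cond_true, Bool.cond_false, Bool.not_true, Bool.not_false] at hpar ⊢ <;> omega

theorem LS_images_disjoint (n : ℕ) (b b' : Bool) :
    Disjoint (SetPartition.addBlock (n := n+1) 1 le_rfl '' LS (n+1) b)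
             (SetPartition.addBlock (n := n) 2 one_le_two '' LS n b') := by
  rw [Set.disjoint_left]
  rintro σ ⟨σ₁, _, rfl⟩ ⟨σ₂, _, h⟩
  have h1 : Finset.Icc (n+1+1) (n+1+1) ∈ (SetPartition.addBlock (n := n+1) 1 le_rfl σ₁).blocks :=
    Finset.mem_insert_self _ _
  have h2 : Finset.Icc (n+1) (n+2) ∈ (SetPartition.addBlock (n := n+1) 1 le_rfl σ₁).blocks := by
    rw [← h]; exact Finset.mem_insert_self _ _
  have hne : Finset.Icc (n+1+1) (n+1+1) ≠ Finset.Icc (n+1) (n+2) := by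
    intro he
    have : (n+1 : ℕ) ∈ Finset.Icc (n+1+1) (n+1+1) := by
      rw [he, Finset.mem_Icc]; omega
    rw [Finset.mem_Icc] at this; omega
  have hdisj := (SetPartition.addBlock (n := n+1) 1 le_rfl σ₁).disj _ h1 _ h2 hne
  have hmem : (n+2 : ℕ) ∈ Finset.Icc (n+1+1) (n+1+1) := by rw [Finset.mem_Icc]; omega
  have hmem' : (n+2 : ℕ) ∈ Finset.Icc (n+1) (n+2) := by rw [Finset.mem_Icc]; omega
  exact (Finset.disjoint_left.1 hdisj hmem) hmem'

theorem LS_rec (n : ℕ) (b : Bool) :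
    (LS (n+2) b).ncard = (LS (n+1) b).ncard + (LS n (!b)).ncard := by
  rw [LS_succ_succ, Set.ncard_union_eq (LS_images_disjoint n b (!b))
      (Set.toFinite _) (Set.toFinite _),
    Set.ncard_image_of_injective _ (SetPartition.addBlock_injective 1 le_rfl),
    Set.ncard_image_of_injective _ (SetPartition.addBlock_injective 2 one_le_two)]

/-- The empty partition of `[0]`. -/
def emptyPartition : SetPartition 0 :=
  ⟨∅, by simp, by simp, by simp⟩

theorem eq_emptyPartition (σ : SetPartition 0) : σ = emptyPartition := by
  apply SetPartition.ext'_s14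
  show σ.blocks = ∅
  rw [Finset.eq_empty_iff_forall_notMem]
  intro B hB
  have hne := σ.nonempty_mem B hB
  have hsub := σ.block_subset hB
  obtain ⟨x, hx⟩ := hne
  have := hsub hx
  simp at this

/-- The unique partition of `[1]`. -/
def onePartition : SetPartition 1 :=
  ⟨{{1}}, by simp, by simp, by simp⟩

theorem eq_onePartition (σ : SetPartition 1) : σ = onePartition := by
  apply SetPartition.ext'_s14
  have hsub : ∀ B ∈ σ.blocks, B = {1} := by
    intro B hB
    have hsub := σ.block_subset hB
    have hne := σ.nonempty_mem B hB
    rw [show Finset.Icc 1 1 = ({1} : Finset ℕ) from Finset.Icc_self 1] at hsub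
    rcases Finset.subset_singleton_iff.1 hsub with h | h
    · exact absurd h (Finset.nonempty_iff_ne_empty.1 hne)
    · exact h
  have h1 : (1 : ℕ) ∈ σ.blocks.sup id := by rw [σ.cover]; simp
  obtain ⟨B, hB, _⟩ := Finset.mem_sup.1 h1
  ext C
  simp only [onePartition, Finset.mem_singleton]
  constructor
  · exact fun hC => hsub C hC
  · intro hC; subst hC
    rwa [← hsub B hB]

theorem LS_zero_true : (LS 0 true).ncard = 1 := by
  have : LS 0 true = {emptyPartition} := by
    ext σ
    simp only [Set.mem_singleton_iff]
    constructor
    · intro _; exact eq_emptyPartition σ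
    · rintro rfl
      refine ⟨?_, ?_, ?_⟩ <;> simp [emptyPartition, SetPartition.Layered]
  rw [this, Set.ncard_singleton]

theorem LS_zero_false : (LS 0 false).ncard = 0 := by
  have : LS 0 false = ∅ := by
    ext σ
    simp only [Set.mem_empty_iff_false, iff_false]
    rintro ⟨_, _, hpar⟩
    rw [eq_emptyPartition σ] at hpar
    simp [emptyPartition] at hpar
  rw [this, Set.ncard_empty]

theorem LS_one_true : (LS 1 true).ncard = 1 := by
  have : LS 1 true = {onePartition} := by
    ext σ
    simp only [Set.mem_singleton_iff]
    constructor
    · intro _; exact eq_onePartition σ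
    · rintro rfl
      refine ⟨?_, ?_, ?_⟩
      · intro B hB
        simp only [onePartition, Finset.mem_singleton] at hB
        exact ⟨1, 1, by simp [hB]⟩
      · intro B hB
        simp only [onePartition, Finset.mem_singleton] at hB
        simp [hB]
      · simp [onePartition]
  rw [this, Set.ncard_singleton]

theorem LS_one_false : (LS 1 false).ncard = 0 := by
  have : LS 1 false = ∅ := by
    ext σ
    simp only [Set.mem_empty_iff_false, iff_false]
    rintro ⟨_, _, hpar⟩
    rw [eq_onePartition σ] at hpar
    simp [onePartition] at hpar
  rw [this, Set.ncard_empty]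

theorem eLM_eq (n : ℕ) : eLM n = (LS n true).ncard := by
  unfold eLM LS
  congr 1
  ext σ
  simp only [Set.mem_setOf_eq, SetPartition.IsEven, Nat.even_iff, Bool.cond_true]

theorem oLM_eq (n : ℕ) : oLM n = (LS n false).ncard := by
  unfold oLM LS
  congr 1
  ext σ
  simp only [Set.mem_setOf_eq, SetPartition.IsEven, Nat.even_iff, Bool.cond_false]
  constructor
  · rintro ⟨h1, h2, h3⟩; exact ⟨h1, h2, by omega⟩
  · rintro ⟨h1, h2, h3⟩; exact ⟨h1, h2, by omega⟩

/-- The key arithmetic statement. -/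
def R (n : ℕ) : Prop :=
  ((n % 6 = 0 ∨ n % 6 = 1) →
      2 * (LS n true).ncard = F n + 1 ∧ 2 * (LS n false).ncard + 1 = F n) ∧
  ((n % 6 = 2 ∨ n % 6 = 5) →
      2 * (LS n true).ncard = F n ∧ 2 * (LS n false).ncard = F n) ∧
  ((n % 6 = 3 ∨ n % 6 = 4) →
      2 * (LS n true).ncard + 1 = F n ∧ 2 * (LS n false).ncard = F n + 1)

theorem R_all (n : ℕ) : R n := by
  suffices h : ∀ m, R m ∧ R (m + 1) from (h n).1
  intro m
  induction m with
  | zero =>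
    constructor
    · refine ⟨fun _ => ?_, fun h => ?_, fun h => ?_⟩
      · rw [LS_zero_true, LS_zero_false]; simp [F]
      · omega
      · omega
    · refine ⟨fun _ => ?_, fun h => ?_, fun h => ?_⟩
      · rw [LS_one_true, LS_one_false]; simp [F]
      · omega
      · omega
  | succ m ih =>
    obtain ⟨hm, hm1⟩ := ih
    refine ⟨hm1, ?_⟩
    show R (m + 2)
    have he : (LS (m+2) true).ncard = (LS (m+1) true).ncard + (LS m false).ncard := by
      have := LS_rec m true; simpa using this
    have ho : (LS (m+2) false).ncard = (LS (m+1) false).ncard + (LS m true).ncard := by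
      have := LS_rec m false; simpa using this
    have hF : F (m + 2) = F (m + 1) + F m := rfl
    obtain ⟨hm_a, hm_b, hm_c⟩ := hm
    obtain ⟨hm1_a, hm1_b, hm1_c⟩ := hm1
    have h6 : m % 6 = 0 ∨ m % 6 = 1 ∨ m % 6 = 2 ∨ m % 6 = 3 ∨ m % 6 = 4 ∨ m % 6 = 5 := by
      omega
    rcases h6 with h | h | h | h | h | h
    · obtain ⟨a1, a2⟩ := hm_a (by omega)
      obtain ⟨b1, b2⟩ := hm1_a (by omega)
      exact ⟨fun hh => by omega, fun hh => ⟨by omega, by omega⟩, fun hh => by omega⟩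
    · obtain ⟨a1, a2⟩ := hm_a (by omega)
      obtain ⟨b1, b2⟩ := hm1_b (by omega)
      exact ⟨fun hh => by omega, fun hh => by omega, fun hh => ⟨by omega, by omega⟩⟩
    · obtain ⟨a1, a2⟩ := hm_b (by omega)
      obtain ⟨b1, b2⟩ := hm1_c (by omega)
      exact ⟨fun hh => by omega, fun hh => by omega, fun hh => ⟨by omega, by omega⟩⟩
    · obtain ⟨a1, a2⟩ := hm_c (by omega)
      obtain ⟨b1, b2⟩ := hm1_c (by omega)
      exact ⟨fun hh => by omega, fun hh => ⟨by omega, by omega⟩, fun hh => by omega⟩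
    · obtain ⟨a1, a2⟩ := hm_c (by omega)
      obtain ⟨b1, b2⟩ := hm1_b (by omega)
      exact ⟨fun hh => ⟨by omega, by omega⟩, fun hh => by omega, fun hh => by omega⟩
    · obtain ⟨a1, a2⟩ := hm_b (by omega)
      obtain ⟨b1, b2⟩ := hm1_a (by omega)
      exact ⟨fun hh => ⟨by omega, by omega⟩, fun hh => by omega, fun hh => by omega⟩

theorem stmt14 (n : ℕ) :
    ((n % 6 = 0 ∨ n % 6 = 1) → eLM n = (F n + 1) / 2 ∧ oLM n = F n / 2) ∧
    ((n % 6 = 2 ∨ n % 6 = 5) → 2 * eLM n = F n ∧ 2 * oLM n = F n) ∧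
    ((n % 6 = 3 ∨ n % 6 = 4) → eLM n = F n / 2 ∧ oLM n = (F n + 1) / 2) := by
  obtain ⟨h1, h2, h3⟩ := R_all n
  rw [eLM_eq, oLM_eq]
  refine ⟨fun h => ?_, fun h => ?_, fun h => ?_⟩
  · obtain ⟨a, b⟩ := h1 h; omega
  · exact h2 h
  · obtain ⟨a, b⟩ := h3 h; omega
end

section
/- A partition σ = B₁/B₂/.../B_k of [n] (blocks in canonical order by minima) avoids the generalized pattern 12|3 if and only if every block B_t with |B_t| ≥ 2 satisfies: |B_{t−1}| = 1 (when t ≥ 2), |B_{t+1}| = 1 (when t ≤ k−1), and moreover if B_{t+1} = {a} then a < b for every b ∈ B_t \ {min B_t}. -/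
open Finset

/-- `B` and `C` are consecutive blocks of `σ` in the canonical order by minima,
with `B` immediately preceding `C`. -/
def SetPartition.AdjacentBlocks {n : ℕ} (σ : SetPartition n) (B C : Finset ℕ) : Prop :=
  B ∈ σ.blocks ∧ C ∈ σ.blocks ∧ B.min < C.min ∧
    ∀ D ∈ σ.blocks, ¬ (B.min < D.min ∧ D.min < C.min)

/-- `σ` contains the generalized pattern `12|3`: a copy of `12/3` whose two blocks
occupy adjacent blocks of `σ` (in either order). -/
def SetPartition.Contains12Bar3 {n : ℕ} (σ : SetPartition n) : Prop :=
  ∃ B C : Finset ℕ, (σ.AdjacentBlocks B C ∨ σ.AdjacentBlocks C B) ∧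
    ∃ a ∈ B, ∃ b ∈ B, ∃ c ∈ C, a < b ∧ b < c


private lemma two_elts {s : Finset ℕ} (h : 2 ≤ s.card) : ∃ a ∈ s, ∃ b ∈ s, a < b := by
  rw [show (2:ℕ) = 1 + 1 from rfl, ← Nat.lt_iff_add_one_le, Finset.one_lt_card] at h
  obtain ⟨a, ha, b, hb, hab⟩ := h
  rcases lt_or_gt_of_ne hab with h | h
  · exact ⟨a, ha, b, hb, h⟩
  · exact ⟨b, hb, a, ha, h⟩

theorem stmt16 (n : ℕ) (σ : SetPartition n) :
    ¬ σ.Contains12Bar3 ↔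
      ∀ B ∈ σ.blocks, 2 ≤ B.card →
        (∀ C : Finset ℕ, σ.AdjacentBlocks C B → C.card = 1) ∧
        (∀ C : Finset ℕ, σ.AdjacentBlocks B C → C.card = 1 ∧
          ∀ a ∈ C, ∀ b ∈ B, (b : WithTop ℕ) ≠ B.min → a < b) := by
  constructor
  · intro hav B hB hcard
    obtain ⟨a, ha, b, hb, hab⟩ := two_elts hcard
    have hBne : B.Nonempty := ⟨a, ha⟩
    have key : ∀ C : Finset ℕ, C ∈ σ.blocks →
        (σ.AdjacentBlocks C B ∨ σ.AdjacentBlocks B C) → C.card = 1 := by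
      intro C hCmem hadj
      by_contra hcard'
      have hCne : C.Nonempty := σ.nonempty_mem C hCmem
      have hC1 : 1 ≤ C.card := Finset.one_le_card.mpr hCne
      have hC2 : 2 ≤ C.card := by omega
      obtain ⟨x, hx, y, hy, hxy⟩ := two_elts hC2
      have hBC : B ≠ C := by
        rcases hadj with h | h
        · exact fun e => absurd h.2.2.1 (by rw [e]; exact lt_irrefl _)
        · exact fun e => absurd h.2.2.1 (by rw [e]; exact lt_irrefl _)
      have hdisj := σ.disj B hB C hCmem hBC
      set M := B.max' hBne with hM
      have hMmem : M ∈ B := B.max'_mem hBne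
      have hadj' : σ.AdjacentBlocks C B ∨ σ.AdjacentBlocks B C := hadj
      rcases lt_trichotomy y M with h | h | h
      · exact hav ⟨C, B, hadj, x, hx, y, hy, M, hMmem, hxy, h⟩
      · exact (Finset.disjoint_left.mp hdisj (h ▸ hMmem) hy)
      · have hbM : b ≤ M := B.le_max' b hb
        exact hav ⟨B, C, hadj.symm, a, ha, b, hb, y, hy, hab, lt_of_le_of_lt hbM h⟩
    refine ⟨fun C hCB => key C hCB.1 (Or.inl hCB), fun C hBC => ?_⟩
    refine ⟨key C hBC.2.1 (Or.inr hBC), ?_⟩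
    intro c hc b' hb' hbmin
    by_contra hcb
    push_neg at hcb
    have hne : B ≠ C := fun e => absurd hBC.2.2.1 (by rw [e]; exact lt_irrefl _)
    have hdisj := σ.disj B hB C hBC.2.1 hne
    have hbc' : b' ≠ c := fun e => Finset.disjoint_left.mp hdisj hb' (e ▸ hc)
    have hb'c : b' < c := lt_of_le_of_ne hcb hbc'
    have hmmem : B.min' hBne ∈ B := B.min'_mem hBne
    have hcoem : ((B.min' hBne : ℕ) : WithTop ℕ) = B.min := B.coe_min' hBne
    have hmne : B.min' hBne ≠ b' := fun e => hbmin (by rw [← hcoem, e])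
    have hmlt : B.min' hBne < b' := lt_of_le_of_ne (B.min'_le b' hb') hmne
    exact hav ⟨B, C, Or.inl hBC, B.min' hBne, hmmem, b', hb', c, hc, hmlt, hb'c⟩
  · rintro hcond ⟨B, C, hadj, a, ha, b, hb, c, hc, hab, hbc⟩
    have hB2 : 2 ≤ B.card := by
      rw [show (2:ℕ) = 1 + 1 from rfl, ← Nat.lt_iff_add_one_le, Finset.one_lt_card]
      exact ⟨a, ha, b, hb, Nat.ne_of_lt hab⟩
    have hBmem : B ∈ σ.blocks := by
      rcases hadj with h | h
      · exact h.1
      · exact h.2.1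
    obtain ⟨h1, h2⟩ := hcond B hBmem hB2
    have hminle : B.min ≤ (a : WithTop ℕ) := Finset.min_le ha
    rcases hadj with hBC | hCB
    · obtain ⟨_, hlt⟩ := h2 C hBC
      have hbne : (b : WithTop ℕ) ≠ B.min := by
        intro e
        have : B.min < (b : WithTop ℕ) :=
          lt_of_le_of_lt hminle (by exact_mod_cast hab)
        exact absurd e.symm (ne_of_lt this)
      exact absurd hbc (not_lt.mpr (le_of_lt (hlt c hc b hb hbne)))
    · have hc1 := h1 C hCB
      obtain ⟨z, hz⟩ := Finset.card_eq_one.mp hc1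
      have hcz : c = z := by rw [hz] at hc; exact Finset.mem_singleton.mp hc
      have hCmin : C.min = (c : WithTop ℕ) := by subst hcz; rw [hz, Finset.min_singleton]; rfl
      have : (c : WithTop ℕ) < (a : WithTop ℕ) :=
        lt_of_lt_of_le (hCmin ▸ hCB.2.2.1) hminle
      have hca : c < a := by exact_mod_cast this
      omega
end

section
/- Let b_n be the number of matchings of [n] (partitions with all blocks of size ≤ 2) avoiding the generalized pattern 12|3. Then b_0 = b_1 = 1, b_2 = 2, and for n ≥ 3, b_n = b_{n−1} + (n−2)·b_{n−3}. -/
open Finset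

/-- The number of matchings of `[n]` avoiding the generalized pattern `12|3`. -/
noncomputable def b (n : ℕ) : ℕ :=
  ({σ : SetPartition n | (∀ B ∈ σ.blocks, B.card ≤ 2) ∧ ¬ σ.Contains12Bar3}).ncard



def adjb (s : Finset (Finset ℕ)) (B C : Finset ℕ) : Prop :=
  B ∈ s ∧ C ∈ s ∧ B.min < C.min ∧ ∀ D ∈ s, ¬ (B.min < D.min ∧ D.min < C.min)

instance (s : Finset (Finset ℕ)) (B C : Finset ℕ) : Decidable (adjb s B C) := by
  unfold adjb; infer_instance

def badb (s : Finset (Finset ℕ)) : Prop :=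
  ∃ B ∈ s, ∃ C ∈ s, (adjb s B C ∨ adjb s C B) ∧ ∃ a ∈ B, ∃ b ∈ B, ∃ c ∈ C, a < b ∧ b < c

instance (s : Finset (Finset ℕ)) : Decidable (badb s) := by
  unfold badb; infer_instance

def validb (S : Finset ℕ) (s : Finset (Finset ℕ)) : Prop :=
  (∀ B ∈ s, B.Nonempty) ∧ (∀ B ∈ s, ∀ C ∈ s, B ≠ C → Disjoint B C) ∧
  s.sup id = S ∧ (∀ B ∈ s, B.card ≤ 2) ∧ ¬ badb s

instance (S : Finset ℕ) (s : Finset (Finset ℕ)) : Decidable (validb S s) := by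
  unfold validb; infer_instance

def Qb (S : Finset ℕ) : Finset (Finset (Finset ℕ)) := S.powerset.powerset.filter (validb S)

lemma block_sub {S : Finset ℕ} {s : Finset (Finset ℕ)} (hv : validb S s) {B : Finset ℕ}
    (hB : B ∈ s) : B ⊆ S := by
  rw [← hv.2.2.1]; exact Finset.le_sup (f := id) hB

lemma mem_Qb {S : Finset ℕ} {s : Finset (Finset ℕ)} : s ∈ Qb S ↔ validb S s := by
  constructor
  · intro h; exact (Finset.mem_filter.mp h).2
  · intro h
    refine Finset.mem_filter.mpr ⟨?_, h⟩
    simp only [Finset.mem_powerset]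
    intro B hB
    simpa using block_sub h hB

lemma mem_sup_iff {s : Finset (Finset ℕ)} {x : ℕ} : x ∈ s.sup id ↔ ∃ B ∈ s, x ∈ B := by
  simp [Finset.mem_sup]

lemma min_eq_coe {B : Finset ℕ} (hB : B.Nonempty) : B.min = (B.min' hB : WithBot ℕ) :=
  (Finset.coe_min' hB).symm

lemma min_lt_min_iff {B C : Finset ℕ} (hB : B.Nonempty) (hC : C.Nonempty) :
    B.min < C.min ↔ B.min' hB < C.min' hC := by
  rw [min_eq_coe hB, min_eq_coe hC]; exact WithTop.coe_lt_coe

section Relabel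
variable {f : ℕ → ℕ} {S : Finset ℕ}

def mapP (f : ℕ → ℕ) (s : Finset (Finset ℕ)) : Finset (Finset ℕ) :=
  s.image (fun B => B.image f)

lemma inj_on (hf : ∀ x ∈ S, ∀ y ∈ S, x < y → f x < f y) :
    ∀ a ∈ S, ∀ b ∈ S, f a = f b → a = b := by
  intro a ha b hb h
  rcases lt_trichotomy a b with hl | he | hl
  · exact absurd h (ne_of_lt (hf a ha b hb hl))
  · exact he
  · exact absurd h.symm (ne_of_lt (hf b hb a ha hl))

lemma lt_reflect (hf : ∀ x ∈ S, ∀ y ∈ S, x < y → f x < f y) :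
    ∀ a ∈ S, ∀ b ∈ S, f a < f b → a < b := by
  intro a ha b hb h
  rcases lt_trichotomy a b with hl | he | hl
  · exact hl
  · subst he; exact absurd h (lt_irrefl _)
  · exact absurd (hf b hb a ha hl) (not_lt_of_gt h)

lemma min'_image (hf : ∀ x ∈ S, ∀ y ∈ S, x < y → f x < f y) {B : Finset ℕ}
    (hBS : B ⊆ S) (hB : B.Nonempty) :
    (B.image f).min' (hB.image f) = f (B.min' hB) := by
  apply le_antisymm
  · exact Finset.min'_le _ _ (Finset.mem_image_of_mem f (Finset.min'_mem _ hB))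
  · apply Finset.le_min'
    intro y hy
    obtain ⟨x, hx, rfl⟩ := Finset.mem_image.mp hy
    rcases eq_or_lt_of_le (Finset.min'_le B x hx) with h | h
    · rw [h]
    · exact le_of_lt (hf _ (hBS (Finset.min'_mem _ hB)) _ (hBS hx) h)
end Relabel

section Relabel2
variable {f : ℕ → ℕ} {S : Finset ℕ} {s : Finset (Finset ℕ)}

lemma adjb_map_rev (hf : ∀ x ∈ S, ∀ y ∈ S, x < y → f x < f y) (hv : validb S s)
    {B C : Finset ℕ} (hB : B ∈ s) (hC : C ∈ s)
    (h : adjb (mapP f s) (B.image f) (C.image f)) : adjb s B C := by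
  have hBn := hv.1 B hB
  have hCn := hv.1 C hC
  have hBS := block_sub hv hB
  have hCS := block_sub hv hC
  refine ⟨hB, hC, ?_, ?_⟩
  · rw [min_lt_min_iff hBn hCn]
    have := h.2.2.1
    rw [min_lt_min_iff (hBn.image f) (hCn.image f), min'_image hf hBS hBn,
      min'_image hf hCS hCn] at this
    exact lt_reflect hf _ (hBS (Finset.min'_mem _ hBn)) _ (hCS (Finset.min'_mem _ hCn)) this
  · intro D hD hcon
    have hDn := hv.1 D hD
    have hDS := block_sub hv hD
    rw [min_lt_min_iff hBn hDn, min_lt_min_iff hDn hCn] at hcon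
    refine h.2.2.2 (D.image f) (Finset.mem_image_of_mem _ hD) ?_
    rw [min_lt_min_iff (hBn.image f) (hDn.image f), min'_image hf hBS hBn,
      min'_image hf hDS hDn, min_lt_min_iff (hDn.image f) (hCn.image f),
      min'_image hf hDS hDn, min'_image hf hCS hCn]
    exact ⟨hf _ (hBS (Finset.min'_mem _ hBn)) _ (hDS (Finset.min'_mem _ hDn)) hcon.1,
      hf _ (hDS (Finset.min'_mem _ hDn)) _ (hCS (Finset.min'_mem _ hCn)) hcon.2⟩

lemma badb_map_rev (hf : ∀ x ∈ S, ∀ y ∈ S, x < y → f x < f y) (hv : validb S s)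
    (h : badb (mapP f s)) : badb s := by
  obtain ⟨B', hB', C', hC', hadj, a', ha', b', hb', c', hc', hab, hbc⟩ := h
  obtain ⟨B, hB, rfl⟩ := Finset.mem_image.mp hB'
  obtain ⟨C, hC, rfl⟩ := Finset.mem_image.mp hC'
  obtain ⟨a, ha, rfl⟩ := Finset.mem_image.mp ha'
  obtain ⟨b, hb, rfl⟩ := Finset.mem_image.mp hb'
  obtain ⟨c, hc, rfl⟩ := Finset.mem_image.mp hc'
  have hBS := block_sub hv hB
  have hCS := block_sub hv hC
  refine ⟨B, hB, C, hC, ?_, a, ha, b, hb, c, hc,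
    lt_reflect hf _ (hBS ha) _ (hBS hb) hab,
    lt_reflect hf _ (hBS hb) _ (hCS hc) hbc⟩
  rcases hadj with h | h
  · exact Or.inl (adjb_map_rev hf hv hB hC h)
  · exact Or.inr (adjb_map_rev hf hv hC hB h)

lemma validb_map (hf : ∀ x ∈ S, ∀ y ∈ S, x < y → f x < f y) (hv : validb S s) :
    validb (S.image f) (mapP f s) := by
  refine ⟨?_, ?_, ?_, ?_, ?_⟩
  · intro B' hB'
    obtain ⟨B, hB, rfl⟩ := Finset.mem_image.mp hB'
    exact (hv.1 B hB).image f
  · intro B' hB' C' hC' hne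
    obtain ⟨B, hB, rfl⟩ := Finset.mem_image.mp hB'
    obtain ⟨C, hC, rfl⟩ := Finset.mem_image.mp hC'
    have hBC : B ≠ C := fun h => hne (by rw [h])
    have hd := hv.2.1 B hB C hC hBC
    rw [Finset.disjoint_left]
    intro x hx hx'
    obtain ⟨a, ha, rfl⟩ := Finset.mem_image.mp hx
    obtain ⟨c, hc, hfc⟩ := Finset.mem_image.mp hx'
    have : c = a := inj_on hf c (block_sub hv hC hc) a (block_sub hv hB ha) hfc
    subst this
    exact (Finset.disjoint_left.mp hd ha) hc
  · ext x
    rw [mem_sup_iff, ← hv.2.2.1]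
    constructor
    · rintro ⟨B', hB', hx⟩
      obtain ⟨B, hB, rfl⟩ := Finset.mem_image.mp hB'
      obtain ⟨a, ha, rfl⟩ := Finset.mem_image.mp hx
      exact Finset.mem_image_of_mem f (mem_sup_iff.mpr ⟨B, hB, ha⟩)
    · intro hx
      obtain ⟨a, ha, rfl⟩ := Finset.mem_image.mp hx
      obtain ⟨B, hB, haB⟩ := mem_sup_iff.mp ha
      exact ⟨B.image f, Finset.mem_image_of_mem _ hB, Finset.mem_image_of_mem f haB⟩
  · intro B' hB'
    obtain ⟨B, hB, rfl⟩ := Finset.mem_image.mp hB'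
    exact le_trans Finset.card_image_le (hv.2.2.2.1 B hB)
  · intro hbad
    exact hv.2.2.2.2 (badb_map_rev hf hv hbad)

lemma mapP_inv {g : ℕ → ℕ} (hg : ∀ x ∈ S, g (f x) = x)
    (hs : ∀ B ∈ s, B ⊆ S) : mapP g (mapP f s) = s := by
  unfold mapP
  rw [Finset.image_image]
  have key : ∀ B ∈ s, ((fun B => Finset.image g B) ∘ fun B => Finset.image f B) B = id B := by
    intro B hB
    simp only [Function.comp_apply, id_eq, Finset.image_image]
    have h2 : ∀ x ∈ B, (g ∘ f) x = id x := fun x hx => hg x (hs B hB hx)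
    rw [Finset.image_congr h2, Finset.image_id]
  rw [Finset.image_congr key, Finset.image_id]

lemma Qb_card_relabel {g : ℕ → ℕ} {T : Finset ℕ}
    (hf : ∀ x ∈ S, ∀ y ∈ S, x < y → f x < f y)
    (hg : ∀ x ∈ T, ∀ y ∈ T, x < y → g x < g y)
    (hT : S.image f = T) (hgf : ∀ x ∈ S, g (f x) = x) :
    (Qb S).card = (Qb T).card := by
  have hfg : ∀ y ∈ T, f (g y) = y := by
    intro y hy
    rw [← hT] at hy
    obtain ⟨x, hx, rfl⟩ := Finset.mem_image.mp hy
    rw [hgf x hx]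
  have hS : T.image g = S := by
    rw [← hT, Finset.image_image]
    have : ∀ x ∈ S, (g ∘ f) x = id x := fun x hx => hgf x hx
    rw [Finset.image_congr this, Finset.image_id]
  refine Finset.card_bij' (fun s _ => mapP f s) (fun t _ => mapP g t) ?_ ?_ ?_ ?_
  · intro s hs
    rw [mem_Qb] at hs ⊢
    rw [← hT]
    exact validb_map hf hs
  · intro t ht
    rw [mem_Qb] at ht ⊢
    rw [← hS]
    exact validb_map hg ht
  · intro s hs
    exact mapP_inv hgf (fun B hB => block_sub (mem_Qb.mp hs) hB)
  · intro t ht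
    exact mapP_inv (S := T) hfg (fun B hB => block_sub (mem_Qb.mp ht) hB)
end Relabel2

section Struct
variable {n : ℕ} {s t : Finset (Finset ℕ)}

lemma adjb_of_subset {t s : Finset (Finset ℕ)} (hts : t ⊆ s) {B C : Finset ℕ}
    (hB : B ∈ t) (hC : C ∈ t) (h : adjb s B C) : adjb t B C :=
  ⟨hB, hC, h.2.2.1, fun D hD => h.2.2.2 D (hts hD)⟩

lemma badb_of_subset {t s : Finset (Finset ℕ)} (hts : t ⊆ s)
    (hadj : ∀ B C, adjb t B C → adjb s B C) (h : badb t) : badb s := by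
  obtain ⟨B, hB, C, hC, hd, wit⟩ := h
  exact ⟨B, hts hB, C, hts hC, hd.imp (hadj _ _) (hadj _ _), wit⟩

lemma block_unique (hv : validb (Icc 1 n) s) {B C : Finset ℕ} {x : ℕ}
    (hB : B ∈ s) (hC : C ∈ s) (hxB : x ∈ B) (hxC : x ∈ C) : B = C := by
  by_contra hne
  exact Finset.disjoint_left.mp (hv.2.1 B hB C hC hne) hxB hxC

lemma not_pair12 (hn : 3 ≤ n) (hv : validb (Icc 1 n) s) :
    insert 1 ({2} : Finset ℕ) ∉ s := by
  intro hP
  obtain ⟨C, hC, h3C⟩ := mem_sup_iff.mp (show (3:ℕ) ∈ s.sup id by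
    rw [hv.2.2.1]; exact Finset.mem_Icc.mpr ⟨by norm_num, hn⟩)
  have hCP : C ≠ insert 1 {2} := by
    intro h; subst h; simp at h3C
  have hd := hv.2.1 C hC _ hP hCP
  have hC3 : ∀ x ∈ C, 3 ≤ x := by
    intro x hx
    have hx1 := (Finset.mem_Icc.mp (block_sub hv hC hx)).1
    have hxP : x ∉ insert 1 ({2}:Finset ℕ) := Finset.disjoint_left.mp hd hx
    simp at hxP
    omega
  have hCn : C.Nonempty := ⟨3, h3C⟩
  have hminC : C.min' hCn = 3 :=
    le_antisymm (Finset.min'_le _ _ h3C) (hC3 _ (Finset.min'_mem _ _))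
  have hPn : (insert 1 ({2}:Finset ℕ)).Nonempty := ⟨1, by simp⟩
  have hminP : (insert 1 ({2}:Finset ℕ)).min' hPn = 1 :=
    le_antisymm (Finset.min'_le _ _ (by simp))
      (Finset.mem_Icc.mp (block_sub hv hP (Finset.min'_mem _ _))).1
  have hadj : adjb s (insert 1 {2}) C := by
    refine ⟨hP, hC, ?_, ?_⟩
    · rw [min_lt_min_iff hPn hCn, hminP, hminC]; norm_num
    · intro D hD hcon
      obtain ⟨hcon1, hcon2⟩ := hcon
      have hDn := hv.1 D hD
      rw [min_lt_min_iff hPn hDn, hminP] at hcon1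
      rw [min_lt_min_iff hDn hCn, hminC] at hcon2
      have h2D : D.min' hDn = 2 := by omega
      have h2mem : (2:ℕ) ∈ D := h2D ▸ Finset.min'_mem _ _
      have hDP : D = insert 1 {2} := block_unique hv hD hP h2mem (by simp)
      subst hDP
      rw [hminP] at h2D
      omega
  exact hv.2.2.2.2 ⟨_, hP, C, hC, Or.inl hadj, 1, by simp, 2, by simp, 3, h3C,
    by norm_num, by norm_num⟩
end Struct

section Struct2
variable {n : ℕ} {s t : Finset (Finset ℕ)}

lemma sing2_mem (hn : 3 ≤ n) {b : ℕ} (hb : 3 ≤ b) (hv : validb (Icc 1 n) s)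
    (hP : insert 1 ({b} : Finset ℕ) ∈ s) : ({2} : Finset ℕ) ∈ s := by
  obtain ⟨C, hC, h2C⟩ := mem_sup_iff.mp (show (2:ℕ) ∈ s.sup id by
    rw [hv.2.2.1]; exact Finset.mem_Icc.mpr ⟨by norm_num, by omega⟩)
  have hCP : C ≠ insert 1 {b} := by
    intro h; subst h; simp at h2C; omega
  have hd := hv.2.1 C hC _ hP hCP
  have hC2 : ∀ x ∈ C, 2 ≤ x ∧ x ≠ b := by
    intro x hx
    have hx1 := (Finset.mem_Icc.mp (block_sub hv hC hx)).1
    have hxP : x ∉ insert 1 ({b}:Finset ℕ) := Finset.disjoint_left.mp hd hx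
    simp at hxP
    omega
  have hCn : C.Nonempty := ⟨2, h2C⟩
  have hminC : C.min' hCn = 2 :=
    le_antisymm (Finset.min'_le _ _ h2C) (hC2 _ (Finset.min'_mem _ _)).1
  have hPn : (insert 1 ({b}:Finset ℕ)).Nonempty := ⟨1, by simp⟩
  have hminP : (insert 1 ({b}:Finset ℕ)).min' hPn = 1 :=
    le_antisymm (Finset.min'_le _ _ (by simp))
      (Finset.mem_Icc.mp (block_sub hv hP (Finset.min'_mem _ _))).1
  have hadj : adjb s (insert 1 {b}) C := by
    refine ⟨hP, hC, ?_, ?_⟩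
    · rw [min_lt_min_iff hPn hCn, hminP, hminC]; norm_num
    · intro D hD hcon
      obtain ⟨hcon1, hcon2⟩ := hcon
      have hDn := hv.1 D hD
      rw [min_lt_min_iff hPn hDn, hminP] at hcon1
      rw [min_lt_min_iff hDn hCn, hminC] at hcon2
      omega
  have hCeq : C = {2} := by
    rw [Finset.eq_singleton_iff_unique_mem]
    refine ⟨h2C, ?_⟩
    intro x hx
    by_contra hx2
    have h2 := hC2 x hx
    have hx3 : 3 ≤ x := by omega
    rcases lt_trichotomy x b with hl | he | hl
    · exact hv.2.2.2.2 ⟨C, hC, _, hP, Or.inr hadj, 2, h2C, x, hx, b, by simp,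
        by omega, hl⟩
    · exact h2.2 he
    · exact hv.2.2.2.2 ⟨_, hP, C, hC, Or.inl hadj, 1, by simp, b, by simp, x, hx,
        by omega, hl⟩
  rw [← hCeq]; exact hC

lemma one_block (hn : 3 ≤ n) (hv : validb (Icc 1 n) s) :
    ({1} : Finset ℕ) ∈ s ∨ ∃ b, 3 ≤ b ∧ b ≤ n ∧ insert 1 ({b} : Finset ℕ) ∈ s := by
  obtain ⟨B, hB, h1B⟩ := mem_sup_iff.mp (show (1:ℕ) ∈ s.sup id by
    rw [hv.2.2.1]; exact Finset.mem_Icc.mpr ⟨le_refl 1, by omega⟩)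
  have hcard : B.card = 1 ∨ B.card = 2 := by
    have h1 := hv.2.2.2.1 B hB
    have h2 : 1 ≤ B.card := Finset.card_pos.mpr ⟨1, h1B⟩
    omega
  rcases hcard with h | h
  · left
    obtain ⟨a, ha⟩ := Finset.card_eq_one.mp h
    subst ha
    simp at h1B
    subst h1B
    exact hB
  · right
    obtain ⟨a, c, hac, hB2⟩ := Finset.card_eq_two.mp h
    subst hB2
    simp at h1B
    obtain ⟨b, hb1, hBb⟩ : ∃ b, b ≠ 1 ∧ ({a, c} : Finset ℕ) = insert 1 {b} := by
      rcases h1B with rfl | rfl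
      · exact ⟨c, Ne.symm hac, rfl⟩
      · exact ⟨a, hac, Finset.pair_comm a 1⟩
    rw [hBb] at hB
    have hbn := Finset.mem_Icc.mp (block_sub hv hB (by simp : b ∈ insert 1 ({b}:Finset ℕ)))
    have hb2 : b ≠ 2 := by
      intro hh; subst hh
      exact not_pair12 hn hv hB
    exact ⟨b, by omega, hbn.2, hB⟩
end Struct2

section Bij1
variable {n : ℕ} {s t : Finset (Finset ℕ)}

lemma valid_erase1 (hv : validb (Icc 1 n) s) (h1 : ({1}:Finset ℕ) ∈ s) :
    validb (Icc 2 n) (s.erase {1}) := by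
  have hsub : s.erase {1} ⊆ s := Finset.erase_subset _ _
  have hmem : ∀ B ∈ s.erase {1}, ∀ x ∈ B, 2 ≤ x ∧ x ≤ n := by
    intro B hB x hx
    have hB' := Finset.mem_of_mem_erase hB
    have hne := Finset.ne_of_mem_erase hB
    have hIcc := Finset.mem_Icc.mp (block_sub hv hB' hx)
    have hx1 : x ≠ 1 := by
      intro h; subst h
      exact Finset.disjoint_left.mp (hv.2.1 B hB' {1} h1 hne) hx (Finset.mem_singleton_self 1)
    omega
  refine ⟨fun B hB => hv.1 B (hsub hB),
    fun B hB C hC => hv.2.1 B (hsub hB) C (hsub hC), ?_,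
    fun B hB => hv.2.2.2.1 B (hsub hB), ?_⟩
  · ext x
    rw [mem_sup_iff, Finset.mem_Icc]
    constructor
    · rintro ⟨B, hB, hx⟩
      exact hmem B hB x hx
    · intro hx
      obtain ⟨B, hB, hxB⟩ := mem_sup_iff.mp (show x ∈ s.sup id by
        rw [hv.2.2.1]; exact Finset.mem_Icc.mpr ⟨by omega, hx.2⟩)
      refine ⟨B, Finset.mem_erase.mpr ⟨?_, hB⟩, hxB⟩
      intro h; subst h
      simp at hxB
      omega
  · intro hbad
    refine hv.2.2.2.2 (badb_of_subset hsub ?_ hbad)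
    intro B C hadj
    refine ⟨hsub hadj.1, hsub hadj.2.1, hadj.2.2.1, ?_⟩
    intro D hD hcon
    by_cases hD1 : D = {1}
    · subst hD1
      have hBn := hv.1 B (hsub hadj.1)
      have h2B : 2 ≤ B.min' hBn := (hmem B hadj.1 _ (Finset.min'_mem _ _)).1
      have hc1 := hcon.1
      rw [min_lt_min_iff hBn ⟨1, Finset.mem_singleton_self 1⟩] at hc1
      simp at hc1
      omega
    · exact hadj.2.2.2 D (Finset.mem_erase.mpr ⟨hD1, hD⟩) hcon

lemma one_notMem_blocks (hv : validb (Icc 2 n) t) : ({1}:Finset ℕ) ∉ t := by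
  intro h
  have := Finset.mem_Icc.mp (block_sub hv h (Finset.mem_singleton_self 1))
  omega

lemma valid_insert1 (hn : 1 ≤ n) (hv : validb (Icc 2 n) t) :
    validb (Icc 1 n) (insert {1} t) := by
  have hge : ∀ B ∈ t, ∀ x ∈ B, 2 ≤ x := fun B hB x hx =>
    (Finset.mem_Icc.mp (block_sub hv hB hx)).1
  refine ⟨?_, ?_, ?_, ?_, ?_⟩
  · intro B hB
    rcases Finset.mem_insert.mp hB with rfl | hB
    · exact ⟨1, Finset.mem_singleton_self 1⟩
    · exact hv.1 B hB
  · intro B hB C hC hne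
    rcases Finset.mem_insert.mp hB with rfl | hB <;>
      rcases Finset.mem_insert.mp hC with rfl | hC
    · exact absurd rfl hne
    · rw [Finset.disjoint_left]
      intro x hx h
      simp at hx; subst hx
      exact absurd (hge C hC 1 h) (by omega)
    · rw [Finset.disjoint_right]
      intro x hx h
      simp at hx; subst hx
      exact absurd (hge B hB 1 h) (by omega)
    · exact hv.2.1 B hB C hC hne
  · ext x
    rw [mem_sup_iff, Finset.mem_Icc]
    constructor
    · rintro ⟨B, hB, hx⟩
      rcases Finset.mem_insert.mp hB with rfl | hB
      · simp at hx; omega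
      · have := Finset.mem_Icc.mp (block_sub hv hB hx); omega
    · intro hx
      by_cases h1 : x = 1
      · exact ⟨{1}, Finset.mem_insert_self _ _, by simp [h1]⟩
      · obtain ⟨B, hB, hxB⟩ := mem_sup_iff.mp (show x ∈ t.sup id by
          rw [hv.2.2.1]; exact Finset.mem_Icc.mpr ⟨by omega, hx.2⟩)
        exact ⟨B, Finset.mem_insert_of_mem hB, hxB⟩
  · intro B hB
    rcases Finset.mem_insert.mp hB with rfl | hB
    · simp
    · exact hv.2.2.2.1 B hB
  · rintro ⟨B, hB, C, hC, hadj, a, ha, b, hb, c, hc, hab, hbc⟩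
    have hB1 : B ≠ {1} := by
      intro h; subst h
      simp at ha hb
      omega
    have hBt := (Finset.mem_insert.mp hB).resolve_left hB1
    have hC1 : C ≠ {1} := by
      intro h; subst h
      simp at hc
      subst hc
      exact absurd (hge B hBt b hb) (by omega)
    have hCt := (Finset.mem_insert.mp hC).resolve_left hC1
    refine hv.2.2.2.2 ⟨B, hBt, C, hCt, ?_, a, ha, b, hb, c, hc, hab, hbc⟩
    exact hadj.imp (adjb_of_subset (Finset.subset_insert _ _) hBt hCt)
      (adjb_of_subset (Finset.subset_insert _ _) hCt hBt)

lemma card_filter_one (hn : 3 ≤ n) :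
    ((Qb (Icc 1 n)).filter (fun s => ({1}:Finset ℕ) ∈ s)).card = (Qb (Icc 2 n)).card := by
  refine Finset.card_bij' (fun s _ => s.erase {1}) (fun t _ => insert {1} t) ?_ ?_ ?_ ?_
  · intro s hs
    rw [Finset.mem_filter] at hs
    exact mem_Qb.mpr (valid_erase1 (mem_Qb.mp hs.1) hs.2)
  · intro t ht
    rw [Finset.mem_filter]
    exact ⟨mem_Qb.mpr (valid_insert1 (by omega) (mem_Qb.mp ht)), Finset.mem_insert_self _ _⟩
  · intro s hs
    rw [Finset.mem_filter] at hs
    exact Finset.insert_erase hs.2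
  · intro t ht
    exact Finset.erase_insert (one_notMem_blocks (mem_Qb.mp ht))
end Bij1

section Bij2
variable {n b : ℕ} {s t : Finset (Finset ℕ)}

lemma valid_erase2 (hn : 3 ≤ n) (hb3 : 3 ≤ b) (hv : validb (Icc 1 n) s)
    (hP : insert 1 ({b}:Finset ℕ) ∈ s) :
    validb ((Icc 3 n).erase b) ((s.erase (insert 1 {b})).erase {2}) := by
  have h2 : ({2}:Finset ℕ) ∈ s := sing2_mem hn hb3 hv hP
  set t := (s.erase (insert 1 ({b}:Finset ℕ))).erase {2} with ht
  have hmemt : ∀ B, B ∈ t ↔ B ∈ s ∧ B ≠ insert 1 {b} ∧ B ≠ {2} := by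
    intro B
    rw [ht, Finset.mem_erase, Finset.mem_erase]
    tauto
  have hsub : t ⊆ s := fun B hB => ((hmemt B).mp hB).1
  have hmem : ∀ B ∈ t, ∀ x ∈ B, 3 ≤ x ∧ x ≤ n ∧ x ≠ b := by
    intro B hB x hx
    obtain ⟨hBs, hBP, hB2⟩ := (hmemt B).mp hB
    have hIcc := Finset.mem_Icc.mp (block_sub hv hBs hx)
    have hx1 : x ∉ insert 1 ({b}:Finset ℕ) :=
      Finset.disjoint_left.mp (hv.2.1 B hBs _ hP hBP) hx
    have hx2 : x ∉ ({2}:Finset ℕ) :=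
      Finset.disjoint_left.mp (hv.2.1 B hBs _ h2 hB2) hx
    simp at hx1 hx2
    omega
  refine ⟨fun B hB => hv.1 B (hsub hB),
    fun B hB C hC => hv.2.1 B (hsub hB) C (hsub hC), ?_,
    fun B hB => hv.2.2.2.1 B (hsub hB), ?_⟩
  · ext x
    rw [mem_sup_iff, Finset.mem_erase, Finset.mem_Icc]
    constructor
    · rintro ⟨B, hB, hx⟩
      have := hmem B hB x hx
      tauto
    · rintro ⟨hxb, hx3, hxn⟩
      obtain ⟨B, hB, hxB⟩ := mem_sup_iff.mp (show x ∈ s.sup id by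
        rw [hv.2.2.1]; exact Finset.mem_Icc.mpr ⟨by omega, hxn⟩)
      refine ⟨B, (hmemt B).mpr ⟨hB, ?_, ?_⟩, hxB⟩
      · intro h; subst h; simp at hxB; omega
      · intro h; subst h; simp at hxB; omega
  · intro hbad
    refine hv.2.2.2.2 (badb_of_subset hsub ?_ hbad)
    intro B C hadj
    refine ⟨hsub hadj.1, hsub hadj.2.1, hadj.2.2.1, ?_⟩
    intro D hD hcon
    by_cases hDt : D ∈ t
    · exact hadj.2.2.2 D hDt hcon
    · have hBn := hv.1 B (hsub hadj.1)
      have hDn := hv.1 D hD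
      have h3B : 3 ≤ B.min' hBn := (hmem B hadj.1 _ (Finset.min'_mem _ _)).1
      have hc1 := hcon.1
      rw [min_lt_min_iff hBn hDn] at hc1
      have hDcase : D = insert 1 ({b}:Finset ℕ) ∨ D = {2} := by
        by_contra hcontra
        push_neg at hcontra
        exact hDt ((hmemt D).mpr ⟨hD, hcontra.1, hcontra.2⟩)
      have : D.min' hDn ≤ 2 := by
        rcases hDcase with rfl | rfl
        · exact le_trans (Finset.min'_le _ 1 (by simp)) (by omega)
        · exact le_of_eq (by simp)
      omega

lemma valid_insert2 (hn : 3 ≤ n) (hb3 : 3 ≤ b) (hbn : b ≤ n)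
    (hv : validb ((Icc 3 n).erase b) t) :
    validb (Icc 1 n) (insert (insert 1 {b}) (insert {2} t)) := by
  have hge : ∀ B ∈ t, ∀ x ∈ B, 3 ≤ x ∧ x ≤ n ∧ x ≠ b := by
    intro B hB x hx
    have := block_sub hv hB hx
    rw [Finset.mem_erase, Finset.mem_Icc] at this
    tauto
  set s := insert (insert 1 ({b}:Finset ℕ)) (insert ({2}:Finset ℕ) t) with hs
  have hmems : ∀ B, B ∈ s ↔ B = insert 1 {b} ∨ B = {2} ∨ B ∈ t := by
    intro B; rw [hs]; simp
  have hPn : (insert 1 ({b}:Finset ℕ)).Nonempty := ⟨1, by simp⟩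
  have hminP : (insert 1 ({b}:Finset ℕ)).min' hPn = 1 :=
    le_antisymm (Finset.min'_le _ _ (by simp))
      (Finset.le_min' _ _ _ (fun x hx => by simp at hx; omega))
  have h2n : ({2}:Finset ℕ).Nonempty := ⟨2, Finset.mem_singleton_self 2⟩
  have hmin2 : ({2}:Finset ℕ).min' h2n = 2 := by simp
  -- min' of any block ≥ 1
  have hminge : ∀ B, (hB : B ∈ s) → ∀ x ∈ B, 1 ≤ x := by
    intro B hB x hx
    rcases (hmems B).mp hB with rfl | rfl | hBt
    · simp at hx; omega
    · simp at hx; omega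
    · exact le_trans (by omega) (hge B hBt x hx).1
  refine ⟨?_, ?_, ?_, ?_, ?_⟩
  · intro B hB
    rcases (hmems B).mp hB with rfl | rfl | hBt
    · exact hPn
    · exact h2n
    · exact hv.1 B hBt
  · intro B hB C hC hne
    have hdPt : ∀ X ∈ t, Disjoint (insert 1 ({b}:Finset ℕ)) X := by
      intro X hX
      rw [Finset.disjoint_left]
      intro x hx hx'
      have := hge X hX x hx'
      simp at hx
      omega
    have hd2t : ∀ X ∈ t, Disjoint ({2}:Finset ℕ) X := by
      intro X hX
      rw [Finset.disjoint_left]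
      intro x hx hx'
      have := hge X hX x hx'
      simp at hx
      omega
    have hdP2 : Disjoint (insert 1 ({b}:Finset ℕ)) ({2}:Finset ℕ) := by
      rw [Finset.disjoint_left]
      intro x hx hx'
      simp at hx hx'
      omega
    rcases (hmems B).mp hB with rfl | rfl | hBt <;>
      rcases (hmems C).mp hC with rfl | rfl | hCt
    · exact absurd rfl hne
    · exact hdP2
    · exact hdPt C hCt
    · exact hdP2.symm
    · exact absurd rfl hne
    · exact hd2t C hCt
    · exact (hdPt B hBt).symm
    · exact (hd2t B hBt).symm
    · exact hv.2.1 B hBt C hCt hne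
  · ext x
    rw [mem_sup_iff, Finset.mem_Icc]
    constructor
    · rintro ⟨B, hB, hx⟩
      rcases (hmems B).mp hB with rfl | rfl | hBt
      · simp at hx; omega
      · simp at hx; omega
      · have := hge B hBt x hx; omega
    · intro hx
      by_cases h1 : x = 1 ∨ x = b
      · refine ⟨insert 1 {b}, (hmems _).mpr (Or.inl rfl), by simp; tauto⟩
      · by_cases h2 : x = 2
        · exact ⟨{2}, (hmems _).mpr (Or.inr (Or.inl rfl)), by simp [h2]⟩
        · push_neg at h1
          obtain ⟨B, hB, hxB⟩ := mem_sup_iff.mp (show x ∈ t.sup id by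
            rw [hv.2.2.1]
            rw [Finset.mem_erase, Finset.mem_Icc]
            exact ⟨h1.2, by omega, hx.2⟩)
          exact ⟨B, (hmems _).mpr (Or.inr (Or.inr hB)), hxB⟩
  · intro B hB
    rcases (hmems B).mp hB with rfl | rfl | hBt
    · exact le_trans (Finset.card_insert_le _ _) (by simp)
    · simp
    · exact hv.2.2.2.1 B hBt
  · -- no bad pattern
    rintro ⟨B, hB, C, hC, hadj, a, ha, b', hb', c, hc, hab, hbc⟩
    -- helper: nothing is adjacent-before P
    have hnotadjP : ∀ X, ¬ adjb s X (insert 1 {b}) := by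
      intro X hX
      have hXn : X.Nonempty := by
        rcases (hmems X).mp hX.1 with rfl | rfl | hXt
        · exact hPn
        · exact h2n
        · exact hv.1 X hXt
      have := hX.2.2.1
      rw [min_lt_min_iff hXn hPn, hminP] at this
      have := hminge X hX.1 _ (Finset.min'_mem _ hXn)
      omega
    -- helper: adjacent-after P must be {2}
    have hadjP : ∀ C', adjb s (insert 1 {b}) C' → C' = {2} := by
      intro C' hC'
      have hC'n : C'.Nonempty := by
        rcases (hmems C').mp hC'.2.1 with rfl | rfl | hXt
        · exact hPn
        · exact h2n
        · exact hv.1 C' hXt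
      rcases (hmems C').mp hC'.2.1 with rfl | rfl | hXt
      · exfalso
        have := hC'.2.2.1
        rw [min_lt_min_iff hPn hC'n] at this
        omega
      · rfl
      · exfalso
        have h3C' : 3 ≤ C'.min' hC'n := (hge C' hXt _ (Finset.min'_mem _ _)).1
        refine hC'.2.2.2 {2} ((hmems _).mpr (Or.inr (Or.inl rfl))) ?_
        rw [min_lt_min_iff hPn h2n, min_lt_min_iff h2n hC'n, hminP, hmin2]
        exact ⟨by omega, by omega⟩
    rcases (hmems B).mp hB with rfl | rfl | hBt
    · -- B = P : then C = {2} and c = 2, but b' ∈ P with b' > a ≥ 1 means b' = b ≥ 3 > 2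
      have hCeq : C = {2} := by
        rcases hadj with h | h
        · exact hadjP C h
        · exact absurd h (hnotadjP C)
      subst hCeq
      simp at ha hb' hc
      subst hc
      rcases ha with rfl | rfl <;> rcases hb' with rfl | rfl <;> omega
    · simp at ha hb'
      omega
    · rcases (hmems C).mp hC with rfl | rfl | hCt
      · -- C = P
        rcases hadj with h | h
        · exact hnotadjP B h
        · have := hadjP B h
          subst this
          simp at ha hb'
          omega
      · -- C = {2} : c = 2 but b' ≥ 3
        simp at hc
        subst hc
        exact absurd (hge B hBt b' hb').1 (by omega)
      · -- both in t
        have hts : t ⊆ s := by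
          intro X hX; exact (hmems X).mpr (Or.inr (Or.inr hX))
        refine hv.2.2.2.2 ⟨B, hBt, C, hCt, ?_, a, ha, b', hb', c, hc, hab, hbc⟩
        exact hadj.imp (adjb_of_subset hts hBt hCt) (adjb_of_subset hts hCt hBt)
end Bij2

section Bij2b
variable {n b : ℕ} {s t : Finset (Finset ℕ)}

lemma pair_ne_two (hb3 : 3 ≤ b) : insert 1 ({b}:Finset ℕ) ≠ ({2}:Finset ℕ) := by
  intro h
  have : (1:ℕ) ∈ ({2}:Finset ℕ) := h ▸ (by simp)
  simp at this

lemma pair_notMem (hv : validb ((Icc 3 n).erase b) t) :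
    insert 1 ({b}:Finset ℕ) ∉ t := by
  intro h
  have := block_sub hv h (by simp : (1:ℕ) ∈ insert 1 ({b}:Finset ℕ))
  rw [Finset.mem_erase, Finset.mem_Icc] at this
  omega

lemma two_notMem (hv : validb ((Icc 3 n).erase b) t) : ({2}:Finset ℕ) ∉ t := by
  intro h
  have := block_sub hv h (by simp : (2:ℕ) ∈ ({2}:Finset ℕ))
  rw [Finset.mem_erase, Finset.mem_Icc] at this
  omega

lemma card_filter_pair (hn : 3 ≤ n) (hb3 : 3 ≤ b) (hbn : b ≤ n) :
    ((Qb (Icc 1 n)).filter (fun s => insert 1 ({b}:Finset ℕ) ∈ s)).card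
      = (Qb ((Icc 3 n).erase b)).card := by
  refine Finset.card_bij' (fun s _ => (s.erase (insert 1 {b})).erase {2})
    (fun t _ => insert (insert 1 {b}) (insert {2} t)) ?_ ?_ ?_ ?_
  · intro s hs
    rw [Finset.mem_filter] at hs
    exact mem_Qb.mpr (valid_erase2 hn hb3 (mem_Qb.mp hs.1) hs.2)
  · intro t ht
    rw [Finset.mem_filter]
    exact ⟨mem_Qb.mpr (valid_insert2 hn hb3 hbn (mem_Qb.mp ht)), Finset.mem_insert_self _ _⟩
  · intro s hs
    rw [Finset.mem_filter] at hs
    have hv := mem_Qb.mp hs.1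
    have h2 : ({2}:Finset ℕ) ∈ s := sing2_mem hn hb3 hv hs.2
    have h2e : ({2}:Finset ℕ) ∈ s.erase (insert 1 {b}) :=
      Finset.mem_erase.mpr ⟨fun h => pair_ne_two hb3 h.symm, h2⟩
    show insert (insert 1 {b}) (insert {2} ((s.erase (insert 1 {b})).erase {2})) = s
    rw [Finset.insert_erase h2e, Finset.insert_erase hs.2]
  · intro t ht
    have hv := mem_Qb.mp ht
    have hP : insert 1 ({b}:Finset ℕ) ∉ insert ({2}:Finset ℕ) t := by
      rw [Finset.mem_insert]
      rintro (h | h)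
      · exact pair_ne_two hb3 h
      · exact pair_notMem hv h
    show ((insert (insert 1 {b}) (insert {2} t)).erase (insert 1 {b})).erase {2} = t
    rw [Finset.erase_insert hP, Finset.erase_insert (two_notMem hv)]
end Bij2b

section Count
variable {n : ℕ}

lemma card_Icc2 (hn : 3 ≤ n) : (Qb (Icc 2 n)).card = (Qb (Icc 1 (n-1))).card := by
  symm
  refine Qb_card_relabel (f := fun x => x + 1) (g := fun y => y - 1) ?_ ?_ ?_ ?_
  · intro x _ y _ hxy; omega
  · intro x hx y hy hxy
    rw [Finset.mem_Icc] at hx hy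
    omega
  · ext y
    simp only [Finset.mem_image, Finset.mem_Icc]
    constructor
    · rintro ⟨x, hx, rfl⟩; omega
    · intro hy; exact ⟨y - 1, by omega, by omega⟩
  · intro x _; omega

lemma card_S3 (hn : 3 ≤ n) {b : ℕ} (hb3 : 3 ≤ b) (hbn : b ≤ n) :
    (Qb ((Icc 3 n).erase b)).card = (Qb (Icc 1 (n-3))).card := by
  symm
  refine Qb_card_relabel (f := fun x => if x ≤ b - 3 then x + 2 else x + 3)
    (g := fun y => if y ≤ b - 1 then y - 2 else y - 3) ?_ ?_ ?_ ?_
  · intro x hx y hy hxy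
    rw [Finset.mem_Icc] at hx hy
    split_ifs <;> omega
  · intro x hx y hy hxy
    rw [Finset.mem_erase, Finset.mem_Icc] at hx hy
    split_ifs <;> omega
  · ext y
    simp only [Finset.mem_image, Finset.mem_erase, Finset.mem_Icc]
    constructor
    · rintro ⟨x, hx, rfl⟩
      split_ifs <;> omega
    · rintro ⟨hyb, hy3, hyn⟩
      by_cases h : y < b
      · exact ⟨y - 2, by omega, by rw [if_pos (by omega)]; omega⟩
      · exact ⟨y - 3, by omega, by rw [if_neg (by omega)]; omega⟩
  · intro x hx
    rw [Finset.mem_Icc] at hx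
    split_ifs <;> omega

lemma Qb_rec (hn : 3 ≤ n) :
    (Qb (Icc 1 n)).card = (Qb (Icc 1 (n-1))).card + (n-2) * (Qb (Icc 1 (n-3))).card := by
  classical
  have hsplit := Finset.card_filter_add_card_filter_not
    (s := Qb (Icc 1 n)) (p := fun s => ({1}:Finset ℕ) ∈ s)
  have hneg : (Qb (Icc 1 n)).filter (fun s => ¬ (({1}:Finset ℕ) ∈ s))
      = (Icc 3 n).biUnion (fun b => (Qb (Icc 1 n)).filter (fun s => insert 1 ({b}:Finset ℕ) ∈ s)) := by
    ext s
    simp only [Finset.mem_filter, Finset.mem_biUnion, Finset.mem_Icc]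
    constructor
    · rintro ⟨hs, h1⟩
      rcases one_block hn (mem_Qb.mp hs) with h | ⟨b, hb3, hbn, hP⟩
      · exact absurd h h1
      · exact ⟨b, ⟨hb3, hbn⟩, hs, hP⟩
    · rintro ⟨b, ⟨hb3, hbn⟩, hs, hP⟩
      refine ⟨hs, fun h1 => ?_⟩
      have hne : ({1}:Finset ℕ) ≠ insert 1 ({b}:Finset ℕ) := by
        intro h
        have : b ∈ ({1}:Finset ℕ) := h ▸ (by simp : b ∈ insert 1 ({b}:Finset ℕ))
        simp at this; omega
      exact Finset.disjoint_left.mp ((mem_Qb.mp hs).2.1 _ h1 _ hP hne)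
        (Finset.mem_singleton_self 1) (Finset.mem_insert_self 1 {b})
  have hdisj : ∀ b ∈ (Icc 3 n : Finset ℕ), ∀ b' ∈ (Icc 3 n : Finset ℕ), b ≠ b' →
      Disjoint ((Qb (Icc 1 n)).filter (fun s => insert 1 ({b}:Finset ℕ) ∈ s))
        ((Qb (Icc 1 n)).filter (fun s => insert 1 ({b'}:Finset ℕ) ∈ s)) := by
    intro b hb b' hb' hne
    rw [Finset.mem_Icc] at hb hb'
    rw [Finset.disjoint_left]
    intro s hs hs'
    rw [Finset.mem_filter] at hs hs'
    have hne2 : insert 1 ({b}:Finset ℕ) ≠ insert 1 ({b'}:Finset ℕ) := by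
      intro h
      have : b ∈ insert 1 ({b'}:Finset ℕ) := h ▸ (by simp : b ∈ insert 1 ({b}:Finset ℕ))
      simp at this; omega
    exact Finset.disjoint_left.mp ((mem_Qb.mp hs.1).2.1 _ hs.2 _ hs'.2 hne2)
      (Finset.mem_insert_self 1 {b}) (Finset.mem_insert_self 1 {b'})
  have hsum : ∀ b ∈ (Icc 3 n : Finset ℕ),
      ((Qb (Icc 1 n)).filter (fun s => insert 1 ({b}:Finset ℕ) ∈ s)).card
        = (Qb (Icc 1 (n-3))).card := by
    intro b hb
    rw [Finset.mem_Icc] at hb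
    rw [card_filter_pair hn hb.1 hb.2, card_S3 hn hb.1 hb.2]
  have h23 : n + 1 - 3 = n - 2 := by omega
  rw [← hsplit, hneg, Finset.card_biUnion hdisj, Finset.sum_congr rfl hsum,
    Finset.sum_const, smul_eq_mul, Nat.card_Icc, h23, card_filter_one hn, card_Icc2 hn]
end Count


section Bridge

lemma SetPartition.blocks_injective (n : ℕ) :
    Function.Injective (SetPartition.blocks (n := n)) := by
  rintro ⟨b1, h1, h2, h3⟩ ⟨b2, h1', h2', h3'⟩ h
  simpa using h

lemma adjacent_iff {n : ℕ} (σ : SetPartition n) (B C : Finset ℕ) :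
    σ.AdjacentBlocks B C ↔ adjb σ.blocks B C := Iff.rfl

lemma contains_iff {n : ℕ} (σ : SetPartition n) : σ.Contains12Bar3 ↔ badb σ.blocks := by
  constructor
  · rintro ⟨B, C, hadj, wit⟩
    have hBC : B ∈ σ.blocks ∧ C ∈ σ.blocks := by
      rcases hadj with h | h
      · exact ⟨h.1, h.2.1⟩
      · exact ⟨h.2.1, h.1⟩
    exact ⟨B, hBC.1, C, hBC.2, hadj, wit⟩
  · rintro ⟨B, _, C, _, hadj, wit⟩
    exact ⟨B, C, hadj, wit⟩

lemma b_eq_Qb (n : ℕ) : b n = (Qb (Icc 1 n)).card := by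
  classical
  have himg : SetPartition.blocks ''
      {σ : SetPartition n | (∀ B ∈ σ.blocks, B.card ≤ 2) ∧ ¬ σ.Contains12Bar3}
      = ↑(Qb (Icc 1 n)) := by
    ext t
    simp only [Set.mem_image, Finset.mem_coe, Set.mem_setOf_eq]
    constructor
    · rintro ⟨σ, hσ, rfl⟩
      refine mem_Qb.mpr ⟨σ.nonempty_mem, σ.disj, σ.cover, hσ.1, ?_⟩
      intro hb
      exact hσ.2 ((contains_iff σ).mpr hb)
    · intro ht
      have hv := mem_Qb.mp ht
      refine ⟨⟨t, hv.1, hv.2.1, hv.2.2.1⟩, ⟨hv.2.2.2.1, ?_⟩, rfl⟩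
      intro hc
      exact hv.2.2.2.2 ((contains_iff _).mp hc)
  calc b n = ({σ : SetPartition n | (∀ B ∈ σ.blocks, B.card ≤ 2) ∧
        ¬ σ.Contains12Bar3}).ncard := rfl
    _ = (SetPartition.blocks ''
        {σ : SetPartition n | (∀ B ∈ σ.blocks, B.card ≤ 2) ∧ ¬ σ.Contains12Bar3}).ncard :=
      (Set.ncard_image_of_injective _ (SetPartition.blocks_injective n)).symm
    _ = (↑(Qb (Icc 1 n)) : Set (Finset (Finset ℕ))).ncard := by rw [himg]
    _ = (Qb (Icc 1 n)).card := Set.ncard_coe_finset _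

end Bridge

theorem stmt18 :
    b 0 = 1 ∧ b 1 = 1 ∧ b 2 = 2 ∧
    ∀ n : ℕ, 3 ≤ n → b n = b (n - 1) + (n - 2) * b (n - 3) := by
  refine ⟨?_, ?_, ?_, ?_⟩
  · rw [b_eq_Qb]; decide
  · rw [b_eq_Qb]; decide
  · rw [b_eq_Qb]; decide
  · intro n hn
    rw [b_eq_Qb, b_eq_Qb, b_eq_Qb]
    exact Qb_rec hn
end
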